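/- arXiv:1704.08736 — 5 statements merged into one kernel-verified Lean document; each statement's English description precedes it below -/
import Mathlib

section
/- For every m ∈ {0,1,…,r+1} and every k ∈ ℤ, H_m(k) = H_m(k+1). In other words, the hard-particle partition functions H_m on the graph G_r, evaluated at the weights γ_i(k), are conserved quantities of the A_r Q-system evolution Q_{α,k} ↦ Q_{α,k+1}. -/
open Finset

/-- Adjacency in the graph `G_r` on vertex set `{1, …, 2r+1}`: edges
`{i, i+1}` for `1 ≤ i ≤ 2r`, together with `{2α, 2α+2}` for `1 ≤ α ≤ r-1`. -/
def GrAdj (r i j : ℕ) : Prop :=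
  (max i j = min i j + 1 ∧ 1 ≤ min i j ∧ max i j ≤ 2 * r + 1) ∨
  (Even (min i j) ∧ max i j = min i j + 2 ∧ 2 ≤ min i j ∧ max i j ≤ 2 * r)

instance (r i j : ℕ) : Decidable (GrAdj r i j) := by
  unfold GrAdj; infer_instance

/-- The independent sets (hard-particle configurations) of `G_r`:
subsets of `{1, …, 2r+1}` containing no pair of adjacent vertices. -/
def IndepSets (r : ℕ) : Finset (Finset ℕ) :=
  (Finset.Icc 1 (2 * r + 1)).powerset.filter (fun I => ∀ i ∈ I, ∀ j ∈ I, ¬ GrAdj r i j)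

/-- The loop weights `γ_i(k)` of the `A_r` Q-system:
`γ_{2α-1}(k) = Q_{α-1,k} Q_{α,k+1} / (Q_{α,k} Q_{α-1,k+1})` and
`γ_{2α}(k) = Q_{α-1,k} Q_{α+1,k+1} / (Q_{α,k} Q_{α,k+1})`. -/
noncomputable def gammaWt (Q : ℕ → ℤ → ℂ) (k : ℤ) (i : ℕ) : ℂ :=
  if i % 2 = 1 then
    -- i = 2α - 1 with α = (i+1)/2
    Q ((i + 1) / 2 - 1) k * Q ((i + 1) / 2) (k + 1) /
      (Q ((i + 1) / 2) k * Q ((i + 1) / 2 - 1) (k + 1))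
  else
    -- i = 2α with α = i/2
    Q (i / 2 - 1) k * Q (i / 2 + 1) (k + 1) / (Q (i / 2) k * Q (i / 2) (k + 1))

/-- The Hamiltonian `H_m(k)`: the hard-particle partition function of `G_r`
with weights `γ_i(k)`, summed over independent sets of cardinality `m`. -/
noncomputable def Ham (r : ℕ) (Q : ℕ → ℤ → ℂ) (m : ℕ) (k : ℤ) : ℂ :=
  ∑ I ∈ (IndepSets r).filter (fun I => I.card = m), ∏ i ∈ I, gammaWt Q k i

/-!
Let `P_α(k) ∈ ℂ[X]` be the hard-particle partition function of the vertices `1, …, 2α - 1` of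
`G_r` with weights `γ_i(k)`, the variable `X` counting particles; `H_m(k)` is the coefficient of
`X^m` in `P_{r+1}(k)`. Deleting the vertices `2α + 1` and `2α` gives the three-term recurrence
`P_{α+1} = (1 + γ_{2α+1} X) P_α + γ_{2α} X P_{α-1}`. The Q-system relation makes the weights
`γ'` at time `k + 1` satisfy `γ'_{2α+1} + γ'_{2α} = γ_{2α+1} + γ_{2α+2}` (both sides equal
`Q_{α+1,k+2} Q_{α,k} / (Q_{α+1,k+1} Q_{α,k+1})`) and `γ'_{2α+3} γ_{2α+2} = γ'_{2α+2} γ_{2α+1}`,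
and these two relations propagate the gauge relation `P'_α = P_α + γ_{2α} X P_{α-1}` along the
recurrence. At `α = r + 1` there is no vertex `2r + 2`, so `P'_{r+1} = P_{r+1}`.
-/

open Polynomial

theorem three_term_recurrence_gauge {A : Type*} [CommRing A] {a b a' b' P P' : ℕ → A} {n : ℕ}
    (hP : ∀ α ≤ n, P (α + 1) = (1 + a α) * P α + b α * P (α - 1))
    (hP' : ∀ α ≤ n, P' (α + 1) = (1 + a' α) * P' α + b' α * P' (α - 1))
    (hb : b 0 = 0) (h0 : P' 0 = P 0)
    (hsum : ∀ α ≤ n, a' α + b' α = a α + b (α + 1))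
    (hprod : ∀ α < n, a' (α + 1) * b (α + 1) = b' (α + 1) * a α) :
    ∀ α ≤ n + 1, P' α = P α + b α * P (α - 1) := by
  intro α hα
  induction α using Nat.strong_induction_on with
  | _ α ih =>
    rcases α with _ | _ | β
    · rw [h0, hb, zero_mul, add_zero]
    · linear_combination hP' 0 (by omega) - hP 0 (by omega) + P 0 * hsum 0 (by omega)
        + (1 + a' 0 + b' 0) * h0 - P 0 * hb
    · have hP'_succ := hP' (β + 1) (by omega)
      have hP_succ := hP (β + 1) (by omega)
      have ih_succ := ih (β + 1) (by omega) (by omega)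
      simp only [Nat.add_sub_cancel] at hP'_succ hP_succ ih_succ ⊢
      -- after `hsum` and the recurrence for `P (β + 1)`, the defect is a multiple of `hprod β`
      linear_combination hP'_succ - hP_succ + (1 + a' (β + 1)) * ih_succ
        + b' (β + 1) * ih β (by omega) (by omega) + P (β + 1) * hsum (β + 1) (by omega)
        + P β * hprod β (by omega) - b' (β + 1) * hP β (by omega)

namespace SimpleGraph

variable {V A : Type*} [DecidableEq V] [CommSemiring A] {G : SimpleGraph V}

theorem isIndepSet_insert_iff {v : V} {I : Finset V} (hv : v ∉ I) :
    G.IsIndepSet ↑(insert v I) ↔ G.IsIndepSet (I : Set V) ∧ ∀ u ∈ I, ¬ G.Adj v u := by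
  rw [coe_insert, isIndepSet_iff, Set.pairwise_insert_of_notMem (mem_coe.not.2 hv)]
  simp [G.adj_comm]

variable (G) [DecidableRel G.Adj]

noncomputable def indepSetSum (w : V → A) (s : Finset V) : A :=
  ∑ I ∈ s.powerset.filter (fun I : Finset V => G.IsIndepSet (I : Set V)), ∏ i ∈ I, w i

variable {G}

theorem indepSetSum_empty (w : V → A) : G.indepSetSum w ∅ = 1 := by
  simp [indepSetSum, Finset.filter_singleton]

theorem indepSetSum_insert (w : V → A) {v : V} {s : Finset V} (hv : v ∉ s) :
    G.indepSetSum w (insert v s) =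
      G.indepSetSum w s + w v * G.indepSetSum w {u ∈ s | ¬ G.Adj v u} := by
  simp only [indepSetSum, sum_filter, sum_powerset_insert hv, mul_sum]
  congr 1
  refine (sum_subset (powerset_mono.2 (filter_subset _ s)) ?_).symm.trans (sum_congr rfl ?_)
  · intro I hIs hIF
    have hvI : v ∉ I := fun h => hv (mem_powerset.1 hIs h)
    refine if_neg fun hindep => hIF (mem_powerset.2 fun u hu => mem_filter.2 ?_)
    exact ⟨mem_powerset.1 hIs hu, ((isIndepSet_insert_iff hvI).1 hindep).2 u hu⟩
  · intro I hIF
    have hadj : ∀ u ∈ I, ¬ G.Adj v u := fun u hu => (mem_filter.1 (mem_powerset.1 hIF hu)).2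
    have hvI : v ∉ I := fun h => hv (mem_filter.1 (mem_powerset.1 hIF h)).1
    simp only [isIndepSet_insert_iff hvI, and_iff_left hadj, prod_insert hvI, mul_ite, mul_zero]

end SimpleGraph

theorem Polynomial.coeff_sum_prod_C_mul_X {ι R : Type*} [CommSemiring R] (S : Finset (Finset ι))
    (w : ι → R) (m : ℕ) :
    (∑ I ∈ S, ∏ i ∈ I, C (w i) * X).coeff m =
      ∑ I ∈ S with I.card = m, ∏ i ∈ I, w i := by
  simp only [finsetSum_coeff, prod_mul_distrib, prod_const, ← map_prod,
    coeff_C_mul_X_pow, sum_filter, eq_comm]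

def grGraph (r : ℕ) : SimpleGraph ℕ where
  Adj := GrAdj r
  symm := ⟨fun i j h => by unfold GrAdj at h ⊢; rwa [max_comm, min_comm]⟩
  loopless := ⟨fun i h => by unfold GrAdj at h; omega⟩

instance (r : ℕ) : DecidableRel (grGraph r).Adj :=
  fun i j => inferInstanceAs (Decidable (GrAdj r i j))

section PathStructure

variable {A : Type*} [CommSemiring A] (r : ℕ) (w : ℕ → A)

theorem grGraph_indepSetSum_Icc_succ {n d : ℕ} (hd : d ≤ n)
    (hadj : ∀ u ∈ Icc 1 n, GrAdj r (n + 1) u ↔ d < u) :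
    (grGraph r).indepSetSum w (Icc 1 (n + 1)) =
      (grGraph r).indepSetSum w (Icc 1 n) + w (n + 1) * (grGraph r).indepSetSum w (Icc 1 d) := by
  rw [← insert_Icc_right_eq_Icc_add_one (by omega), SimpleGraph.indepSetSum_insert _ (by simp)]
  congr 3
  ext u
  simp only [mem_filter]
  constructor
  · rintro ⟨hu, hnadj⟩
    exact mem_Icc.2 ⟨(mem_Icc.1 hu).1, not_lt.1 fun h => hnadj ((hadj u hu).2 h)⟩
  · intro hu
    have hu' : u ∈ Icc 1 n := Icc_subset_Icc_right hd hu
    exact ⟨hu', fun h => (mem_Icc.1 hu).2.not_gt ((hadj u hu').1 h)⟩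

theorem grGraph_indepSetSum_Icc_one : (grGraph r).indepSetSum w (Icc 1 1) = 1 + w 1 := by
  rw [grGraph_indepSetSum_Icc_succ r w (n := 0) le_rfl (by simp), Icc_eq_empty (by omega),
    SimpleGraph.indepSetSum_empty, mul_one]

theorem grGraph_indepSetSum_Icc_two_mul_add_three {α : ℕ} (hα : α < r) :
    (grGraph r).indepSetSum w (Icc 1 (2 * α + 3)) =
      (1 + w (2 * α + 3)) * (grGraph r).indepSetSum w (Icc 1 (2 * α + 1)) +
        w (2 * α + 2) * (grGraph r).indepSetSum w (Icc 1 (2 * α - 1)) := by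
  have hadj_odd : ∀ u ∈ Icc 1 (2 * α + 2), GrAdj r (2 * α + 2 + 1) u ↔ 2 * α + 1 < u := by
    intro u hu; rw [mem_Icc] at hu; unfold GrAdj; rw [Nat.even_iff]; omega
  have hadj_even : ∀ u ∈ Icc 1 (2 * α + 1), GrAdj r (2 * α + 1 + 1) u ↔ 2 * α - 1 < u := by
    intro u hu; rw [mem_Icc] at hu; unfold GrAdj; rw [Nat.even_iff]; omega
  rw [grGraph_indepSetSum_Icc_succ r w (by omega) hadj_odd,
    grGraph_indepSetSum_Icc_succ r w (by omega) hadj_even]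
  ring

end PathStructure

/-- `γ_{2α}(k)` for `1 ≤ α ≤ r`, extended by zero to the indices `α = 0` and `α > r`, for which
`G_r` has no vertex `2α`. -/
noncomputable def gammaWtEven (r : ℕ) (Q : ℕ → ℤ → ℂ) (k : ℤ) (α : ℕ) : ℂ :=
  if 1 ≤ α ∧ α ≤ r then gammaWt Q k (2 * α) else 0

section QSystem

variable {r : ℕ} {Q : ℕ → ℤ → ℂ}

theorem gammaWt_two_mul_add_one (k : ℤ) (α : ℕ) :
    gammaWt Q k (2 * α + 1) = Q α k * Q (α + 1) (k + 1) / (Q (α + 1) k * Q α (k + 1)) := by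
  rw [gammaWt, if_pos (by omega), show (2 * α + 1 + 1) / 2 = α + 1 by omega, Nat.add_sub_cancel]

theorem gammaWt_two_mul (k : ℤ) (α : ℕ) :
    gammaWt Q k (2 * α) = Q (α - 1) k * Q (α + 1) (k + 1) / (Q α k * Q α (k + 1)) := by
  rw [gammaWt, if_neg (by omega), Nat.mul_div_cancel_left α two_pos]

theorem gammaWt_succ_add_gammaWtEven_succ (hne : ∀ α ≤ r + 1, ∀ k : ℤ, Q α k ≠ 0)
    (h0 : ∀ k : ℤ, Q 0 k = 1)
    (hrec : ∀ α, 1 ≤ α → α ≤ r → ∀ k : ℤ,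
      Q α (k + 1) * Q α (k - 1) = Q α k ^ 2 + Q (α + 1) k * Q (α - 1) k)
    {α : ℕ} (hα : α ≤ r) (k : ℤ) :
    gammaWt Q (k + 1) (2 * α + 1) + gammaWtEven r Q (k + 1) α =
      Q (α + 1) (k + 1 + 1) * Q α k / (Q (α + 1) (k + 1) * Q α (k + 1)) := by
  have : Q (α + 1) (k + 1) ≠ 0 := hne _ (by omega) _
  rcases Nat.eq_zero_or_pos α with rfl | hpos
  · rw [gammaWtEven, if_neg (by omega), add_zero, gammaWt_two_mul_add_one]
    simp [h0]
  · have hrec' := hrec α hpos hα (k + 1)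
    rw [add_sub_cancel_right] at hrec'
    have : Q α (k + 1 + 1) ≠ 0 := hne _ (by omega) _
    have : Q α (k + 1) ≠ 0 := hne _ (by omega) _
    have : Q α k ≠ 0 := hne _ (by omega) _
    rw [gammaWtEven, if_pos ⟨hpos, hα⟩, gammaWt_two_mul_add_one, gammaWt_two_mul]
    field_simp
    linear_combination -Q (α + 1) (k + 1 + 1) * hrec'

theorem gammaWt_add_gammaWtEven_succ (hne : ∀ α ≤ r + 1, ∀ k : ℤ, Q α k ≠ 0)
    (htop : ∀ k : ℤ, Q (r + 1) k = 1)
    (hrec : ∀ α, 1 ≤ α → α ≤ r → ∀ k : ℤ,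
      Q α (k + 1) * Q α (k - 1) = Q α k ^ 2 + Q (α + 1) k * Q (α - 1) k)
    {α : ℕ} (hα : α ≤ r) (k : ℤ) :
    gammaWt Q k (2 * α + 1) + gammaWtEven r Q k (α + 1) =
      Q (α + 1) (k + 1 + 1) * Q α k / (Q (α + 1) (k + 1) * Q α (k + 1)) := by
  have : Q (α + 1) (k + 1) ≠ 0 := hne _ (by omega) _
  have : Q (α + 1) k ≠ 0 := hne _ (by omega) _
  have : Q α (k + 1) ≠ 0 := hne _ (by omega) _
  have : Q α k ≠ 0 := hne _ (by omega) _
  rcases hα.lt_or_eq with hlt | rfl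
  · have hrec' := hrec (α + 1) (by omega) hlt (k + 1)
    rw [add_sub_cancel_right, Nat.add_sub_cancel] at hrec'
    rw [gammaWtEven, if_pos ⟨by omega, hlt⟩, gammaWt_two_mul_add_one, gammaWt_two_mul,
      Nat.add_sub_cancel]
    field_simp
    linear_combination -hrec'
  · rw [gammaWtEven, if_neg (by omega), add_zero, gammaWt_two_mul_add_one, htop, htop, htop]
    field_simp

theorem gammaWt_mul_gammaWtEven_comm (hne : ∀ α ≤ r + 1, ∀ k : ℤ, Q α k ≠ 0)
    {α : ℕ} (hα : α < r) (k : ℤ) :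
    gammaWt Q (k + 1) (2 * (α + 1) + 1) * gammaWtEven r Q k (α + 1) =
      gammaWtEven r Q (k + 1) (α + 1) * gammaWt Q k (2 * α + 1) := by
  have : Q (α + 1) (k + 1 + 1) ≠ 0 := hne _ (by omega) _
  have : Q (α + 1) (k + 1) ≠ 0 := hne _ (by omega) _
  have : Q (α + 1) k ≠ 0 := hne _ (by omega) _
  have : Q α (k + 1) ≠ 0 := hne _ (by omega) _
  have : Q (α + 1 + 1) (k + 1) ≠ 0 := hne _ (by omega) _
  simp only [gammaWtEven, if_pos (show 1 ≤ α + 1 ∧ α + 1 ≤ r by omega), gammaWt_two_mul_add_one,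
    gammaWt_two_mul, Nat.add_sub_cancel]
  field_simp

end QSystem

noncomputable def gammaPoly (r : ℕ) (Q : ℕ → ℤ → ℂ) (k : ℤ) (α : ℕ) : ℂ[X] :=
  (grGraph r).indepSetSum (fun i => C (gammaWt Q k i) * X) (Icc 1 (2 * α - 1))

theorem Ham_eq_coeff_gammaPoly (r : ℕ) (Q : ℕ → ℤ → ℂ) (m : ℕ) (k : ℤ) :
    Ham r Q m k = (gammaPoly r Q k (r + 1)).coeff m := by
  have hIndep : IndepSets r = (Icc 1 (2 * r + 1)).powerset.filter
      (fun I : Finset ℕ => (grGraph r).IsIndepSet (I : Set ℕ)) := by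
    refine filter_congr fun I _ => ?_
    exact ⟨fun h i hi j hj _ => h i hi j hj,
      fun h i hi j hj => if hij : i = j then hij ▸ (grGraph r).irrefl else h hi hj hij⟩
  rw [gammaPoly, SimpleGraph.indepSetSum, coeff_sum_prod_C_mul_X, Ham, hIndep,
    show 2 * (r + 1) - 1 = 2 * r + 1 by omega]

theorem gammaPoly_zero (r : ℕ) (Q : ℕ → ℤ → ℂ) (k : ℤ) : gammaPoly r Q k 0 = 1 := by
  rw [gammaPoly, Nat.mul_zero, Nat.zero_sub, Icc_eq_empty (by omega),
    SimpleGraph.indepSetSum_empty]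

theorem gammaPoly_succ (r : ℕ) (Q : ℕ → ℤ → ℂ) (k : ℤ) {α : ℕ} (hα : α ≤ r) :
    gammaPoly r Q k (α + 1) = (1 + C (gammaWt Q k (2 * α + 1)) * X) * gammaPoly r Q k α +
      C (gammaWtEven r Q k α) * X * gammaPoly r Q k (α - 1) := by
  rcases α with _ | β
  · rw [gammaPoly_zero, gammaWtEven, if_neg (by omega), gammaPoly, grGraph_indepSetSum_Icc_one]
    simp
  · rw [gammaPoly, show 2 * (β + 1 + 1) - 1 = 2 * β + 3 by omega,
      grGraph_indepSetSum_Icc_two_mul_add_three r _ hα, gammaWtEven, if_pos (by omega),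
      gammaPoly, gammaPoly, Nat.add_sub_cancel, show 2 * (β + 1) - 1 = 2 * β + 1 by omega,
      show 2 * (β + 1) = 2 * β + 2 by omega]

theorem gammaPoly_succ_time {r : ℕ} {Q : ℕ → ℤ → ℂ} (hne : ∀ α ≤ r + 1, ∀ k : ℤ, Q α k ≠ 0)
    (h0 : ∀ k : ℤ, Q 0 k = 1) (htop : ∀ k : ℤ, Q (r + 1) k = 1)
    (hrec : ∀ α, 1 ≤ α → α ≤ r → ∀ k : ℤ,
      Q α (k + 1) * Q α (k - 1) = Q α k ^ 2 + Q (α + 1) k * Q (α - 1) k) (k : ℤ) :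
    ∀ α ≤ r + 1, gammaPoly r Q (k + 1) α =
      gammaPoly r Q k α + C (gammaWtEven r Q k α) * X * gammaPoly r Q k (α - 1) := by
  refine three_term_recurrence_gauge (fun α hα => gammaPoly_succ r Q k hα)
    (fun α hα => gammaPoly_succ r Q (k + 1) hα) ?_ (by rw [gammaPoly_zero, gammaPoly_zero])
    (fun α hα => ?_) (fun α hα => ?_)
  · rw [gammaWtEven, if_neg (by omega), C_0, zero_mul]
  · rw [← add_mul, ← add_mul, ← C_add, ← C_add, gammaWt_succ_add_gammaWtEven_succ hne h0 hrec hα,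
      gammaWt_add_gammaWtEven_succ hne htop hrec hα]
  · rw [mul_mul_mul_comm, ← C_mul, gammaWt_mul_gammaWtEven_comm hne hα, C_mul, mul_mul_mul_comm]

theorem Ham_conserved_Ar_general
    (r : ℕ) (Q : ℕ → ℤ → ℂ)
    (hne : ∀ α ≤ r + 1, ∀ k : ℤ, Q α k ≠ 0)
    (h0 : ∀ k : ℤ, Q 0 k = 1) (htop : ∀ k : ℤ, Q (r + 1) k = 1)
    (hrec : ∀ α, 1 ≤ α → α ≤ r → ∀ k : ℤ,
      Q α (k + 1) * Q α (k - 1) = Q α k ^ 2 + Q (α + 1) k * Q (α - 1) k) :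
    ∀ m ≤ r + 1, ∀ k : ℤ, Ham r Q m k = Ham r Q m (k + 1) := by
  intro m _ k
  have hgauge := gammaPoly_succ_time hne h0 htop hrec k (r + 1) le_rfl
  rw [gammaWtEven, if_neg (by omega), C_0, zero_mul, zero_mul, add_zero] at hgauge
  rw [Ham_eq_coeff_gammaPoly, Ham_eq_coeff_gammaPoly, hgauge]

/-- The Hamiltonians `H_m` are conserved quantities of the `A_r` Q-system
evolution `Q_{α,k} ↦ Q_{α,k+1}`. -/
theorem Ham_conserved_Ar
    (r : ℕ) (hr : 1 ≤ r) (Q : ℕ → ℤ → ℂ)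
    (hne : ∀ α ≤ r + 1, ∀ k : ℤ, Q α k ≠ 0)
    (h0 : ∀ k : ℤ, Q 0 k = 1) (htop : ∀ k : ℤ, Q (r + 1) k = 1)
    (hrec : ∀ α, 1 ≤ α → α ≤ r → ∀ k : ℤ,
      Q α (k + 1) * Q α (k - 1) = Q α k ^ 2 + Q (α + 1) k * Q (α - 1) k) :
    ∀ m ≤ r + 1, ∀ k : ℤ, Ham r Q m k = Ham r Q m (k + 1) :=
  Ham_conserved_Ar_general r Q hne h0 htop hrec
end

section
/- Let k ≥ 1 and let i_1 < j_1 < i_2 < j_2 < ⋯ < i_k < j_k < i_{k+1} be vertices of G_r forming a chain, i.e. such that for all a ∈ {1,…,k+1} and b ∈ {1,…,k} the pair {i_a, j_b} is an edge of G_r if and only if b = a or b = a−1. Then Σ_{a=1}^{k+1} Σ_{b=1}^{k} ε(i_a, j_b) = 0. -/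
open Finset

/-- The intersection pairing `ε(i,j)`: `1` if `i < j` and `{i,j}` is an edge
of `G_r`, `-1` if `i > j` and `{i,j}` is an edge of `G_r`, `0` otherwise. -/
def epsPair (r i j : ℕ) : ℤ :=
  if GrAdj r i j then (if i < j then 1 else -1) else 0

/-- For an odd-length chain `i_1 < j_1 < i_2 < j_2 < ⋯ < i_k < j_k < i_{k+1}`
of vertices of `G_r` (where `{i_a, j_b}` is an edge iff `b = a` or `b = a-1`),
the total intersection pairing vanishes:
`Σ_{a=1}^{k+1} Σ_{b=1}^{k} ε(i_a, j_b) = 0`. -/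
theorem eps_sum_chain_eq_zero
    (r k : ℕ) (hk : 1 ≤ k) (I J : ℕ → ℕ)
    (hImem : ∀ a ∈ Finset.Icc 1 (k + 1), I a ∈ Finset.Icc 1 (2 * r + 1))
    (hJmem : ∀ b ∈ Finset.Icc 1 k, J b ∈ Finset.Icc 1 (2 * r + 1))
    (horder : ∀ a ∈ Finset.Icc 1 k, I a < J a ∧ J a < I (a + 1))
    (hchain : ∀ a ∈ Finset.Icc 1 (k + 1), ∀ b ∈ Finset.Icc 1 k,
      (GrAdj r (I a) (J b) ↔ (b = a ∨ b + 1 = a))) :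
    ∑ a ∈ Finset.Icc 1 (k + 1), ∑ b ∈ Finset.Icc 1 k, epsPair r (I a) (J b) = 0 := by
  rw [Finset.sum_comm]
  apply Finset.sum_eq_zero
  intro b hb
  simp only [Finset.mem_Icc] at hb
  have key : ∀ a ∈ Finset.Icc 1 (k + 1), epsPair r (I a) (J b) =
      (if b = a then (1 : ℤ) else 0) + (if b + 1 = a then (-1 : ℤ) else 0) := by
    intro a ha
    have hch := hchain a ha b (Finset.mem_Icc.mpr hb)
    unfold epsPair
    by_cases h : GrAdj r (I a) (J b)
    · rcases hch.mp h with h1 | h1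
      · subst h1
        have := (horder b (Finset.mem_Icc.mpr hb)).1
        simp [h, this, Nat.succ_ne_self b]
      · subst h1
        have := (horder b (Finset.mem_Icc.mpr hb)).2
        simp [h, Nat.lt_asymm this, this, (Nat.lt_succ_self b).ne']
    · have h1 : ¬ b = a := fun e => h (hch.mpr (Or.inl e))
      have h2 : ¬ b + 1 = a := fun e => h (hch.mpr (Or.inr e))
      simp [h, h1, h2]
  rw [Finset.sum_congr rfl key, Finset.sum_add_distrib,
    Finset.sum_ite_eq, Finset.sum_ite_eq]
  have hb1 : b ∈ Finset.Icc 1 (k + 1) := Finset.mem_Icc.mpr ⟨hb.1, hb.2.trans (Nat.le_succ k)⟩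
  have hb2 : b + 1 ∈ Finset.Icc 1 (k + 1) := Finset.mem_Icc.mpr ⟨Nat.le_add_left 1 b, Nat.succ_le_succ hb.2⟩
  simp [hb1, hb2]
end

section
/- Let R be a commutative ring and let x_1, …, x_{2r+1} ∈ R. Then for all m, n ≥ 0, Σ_{(I,J)} ( Σ_{i∈I} Σ_{j∈J} ε(i,j) ) · ∏_{i∈I} x_i · ∏_{j∈J} x_j = 0, where the outer sum runs over all ordered pairs (I,J) of independent sets of G_r with |I| = m and |J| = n. -/
open Finset

namespace EpsAux

open scoped Classical

/-- basic facts about GrAdj -/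
lemma gradj_symm {r i j : ℕ} (h : GrAdj r i j) : GrAdj r j i := by
  unfold GrAdj at *; rw [max_comm, min_comm]; exact h

lemma gradj_ne {r i j : ℕ} (h : GrAdj r i j) : i ≠ j := by
  rintro rfl; unfold GrAdj at h; simp at h

lemma gradj_facts {r a b : ℕ} (h : GrAdj r a b) (hab : a < b) :
    1 ≤ a ∧ b ≤ 2 * r + 1 ∧ (b = a + 1 ∨ (b = a + 2 ∧ a % 2 = 0)) := by
  unfold GrAdj at h
  rw [max_eq_right hab.le, min_eq_left hab.le] at h
  rcases h with ⟨h1, h2, h3⟩ | ⟨he, h1, h2, h3⟩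
  · omega
  · rw [Nat.even_iff] at he; omega

lemma gradj_consec {r a : ℕ} (h1 : 1 ≤ a) (h2 : a + 1 ≤ 2 * r + 1) : GrAdj r a (a + 1) := by
  left
  rw [max_eq_right (Nat.le_succ a), min_eq_left (Nat.le_succ a)]
  omega

lemma eps_eq_zero_of_not_adj {r i j : ℕ} (h : ¬ GrAdj r i j) : epsPair r i j = 0 := by
  simp [epsPair, h]

lemma eps_antisymm (r i j : ℕ) : epsPair r i j = - epsPair r j i := by
  unfold epsPair
  by_cases h : GrAdj r i j
  · have h' : GrAdj r j i := gradj_symm h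
    have hne := gradj_ne h
    rcases lt_trichotomy i j with hij | hij | hij
    · simp [h, h', hij, not_lt.2 hij.le]
    · exact absurd hij hne
    · simp [h, h', hij, not_lt.2 hij.le]
  · have h' : ¬ GrAdj r j i := fun hc => h (gradj_symm hc)
    simp [h, h']

/-- Independence predicate -/
def Indep (r : ℕ) (I : Finset ℕ) : Prop :=
  I ⊆ Finset.Icc 1 (2 * r + 1) ∧ ∀ i ∈ I, ∀ j ∈ I, ¬ GrAdj r i j

lemma mem_indepSets {r : ℕ} {I : Finset ℕ} : I ∈ IndepSets r ↔ Indep r I := by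
  simp [IndepSets, Indep, Finset.mem_filter, Finset.mem_powerset]

/-- contributing edges -/
def Contrib (r : ℕ) (I J : Finset ℕ) (a b : ℕ) : Prop :=
  GrAdj r a b ∧ a < b ∧ ((a ∈ I ∧ b ∈ J) ∨ (a ∈ J ∧ b ∈ I))

lemma both_occ {r : ℕ} {I J : Finset ℕ} (hI : Indep r I) (hJ : Indep r J)
    {a b : ℕ} (hadj : GrAdj r a b) (hab : a < b) (ha : a ∈ I ∪ J) (hb : b ∈ I ∪ J) :
    Contrib r I J a b := by
  refine ⟨hadj, hab, ?_⟩
  simp only [Finset.mem_union] at ha hb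
  rcases ha with ha | ha
  · rcases hb with hb | hb
    · exact absurd hadj (hI.2 a ha b hb)
    · exact Or.inl ⟨ha, hb⟩
  · rcases hb with hb | hb
    · exact Or.inr ⟨ha, hb⟩
    · exact absurd hadj (hJ.2 a ha b hb)

lemma contrib_occ_left {r : ℕ} {I J : Finset ℕ} {a b : ℕ} (h : Contrib r I J a b) :
    a ∈ I ∪ J := by
  rcases h.2.2 with ⟨h1, _⟩ | ⟨h1, _⟩ <;> simp [h1]

lemma contrib_occ_right {r : ℕ} {I J : Finset ℕ} {a b : ℕ} (h : Contrib r I J a b) :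
    b ∈ I ∪ J := by
  rcases h.2.2 with ⟨_, h1⟩ | ⟨_, h1⟩ <;> simp [h1]

/-- clean cuts -/
def Clean (r : ℕ) (I J : Finset ℕ) (c : ℕ) : Prop :=
  ∀ a b, Contrib r I J a b → ¬ (a ≤ c ∧ c < b)

/-- connectivity (same block) -/
def Conn (r : ℕ) (I J : Finset ℕ) (v w : ℕ) : Prop :=
  ∀ c, min v w ≤ c → c < max v w → ¬ Clean r I J c

lemma conn_refl (r : ℕ) (I J : Finset ℕ) (v : ℕ) : Conn r I J v v := by
  intro c h1 h2; simp at h1 h2; omega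

lemma conn_symm {r : ℕ} {I J : Finset ℕ} {v w : ℕ} (h : Conn r I J v w) : Conn r I J w v := by
  intro c h1 h2
  exact h c (by omega) (by omega)

lemma conn_trans {r : ℕ} {I J : Finset ℕ} {v w u : ℕ}
    (h1 : Conn r I J v w) (h2 : Conn r I J w u) : Conn r I J v u := by
  intro c hc1 hc2
  rcases (by omega : (min v w ≤ c ∧ c < max v w) ∨ (min w u ≤ c ∧ c < max w u)) with h | h
  · exact h1 c h.1 h.2
  · exact h2 c h.1 h.2

lemma conn_of_between {r : ℕ} {I J : Finset ℕ} {v w u : ℕ}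
    (h : Conn r I J v w) (h1 : v ≤ u) (h2 : u ≤ w) : Conn r I J v u := by
  intro c hc1 hc2
  exact h c (by omega) (by omega)

lemma contrib_conn {r : ℕ} {I J : Finset ℕ} {a b : ℕ} (h : Contrib r I J a b) :
    Conn r I J a b := by
  intro c h1 h2 hcl
  have hab := h.2.1
  exact hcl a b h ⟨by omega, by omega⟩

end EpsAux

namespace EpsAux

open scoped Classical

noncomputable def blockOf (r : ℕ) (I J : Finset ℕ) (v : ℕ) : Finset ℕ :=
  (Finset.Icc 1 (2 * r + 1)).filter (fun w => Conn r I J v w)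

lemma mem_blockOf {r : ℕ} {I J : Finset ℕ} {v w : ℕ} :
    w ∈ blockOf r I J v ↔ w ∈ Finset.Icc 1 (2 * r + 1) ∧ Conn r I J v w := by
  simp [blockOf]

lemma blockOf_eq_of_conn {r : ℕ} {I J : Finset ℕ} {v w : ℕ} (h : Conn r I J v w) :
    blockOf r I J v = blockOf r I J w := by
  ext z
  simp only [mem_blockOf]
  exact ⟨fun ⟨hz, hc⟩ => ⟨hz, conn_trans (conn_symm h) hc⟩,
         fun ⟨hz, hc⟩ => ⟨hz, conn_trans h hc⟩⟩

lemma mem_blockOf_self {r : ℕ} {I J : Finset ℕ} {v : ℕ} (hv : v ∈ Finset.Icc 1 (2 * r + 1)) :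
    v ∈ blockOf r I J v := mem_blockOf.2 ⟨hv, conn_refl r I J v⟩

noncomputable def Tset (r : ℕ) (I J : Finset ℕ) : Finset ℕ :=
  (Finset.Icc 1 (2 * r + 1)).filter (fun v =>
    (∃ a b, Contrib r I J a b ∧ Conn r I J v a) ∧
    (I ∩ blockOf r I J v).card = (J ∩ blockOf r I J v).card)

lemma mem_Tset {r : ℕ} {I J : Finset ℕ} {v : ℕ} :
    v ∈ Tset r I J ↔ v ∈ Finset.Icc 1 (2 * r + 1) ∧
      (∃ a b, Contrib r I J a b ∧ Conn r I J v a) ∧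
      (I ∩ blockOf r I J v).card = (J ∩ blockOf r I J v).card := by
  simp [Tset]

lemma mem_Tset_of_conn {r : ℕ} {I J : Finset ℕ} {v w : ℕ} (hv : v ∈ Tset r I J)
    (hc : Conn r I J v w) (hw : w ∈ Finset.Icc 1 (2 * r + 1)) : w ∈ Tset r I J := by
  rcases mem_Tset.1 hv with ⟨_, ⟨a, b, hab, hca⟩, hcard⟩
  refine mem_Tset.2 ⟨hw, ⟨a, b, hab, conn_trans (conn_symm hc) hca⟩, ?_⟩
  rw [← blockOf_eq_of_conn hc]; exact hcard

/-- contributing edges have the same T-membership status at both ends -/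
lemma contrib_T_iff {r : ℕ} {I J : Finset ℕ} {a b : ℕ}
    (hIc : I ⊆ Finset.Icc 1 (2 * r + 1)) (hJc : J ⊆ Finset.Icc 1 (2 * r + 1))
    (h : Contrib r I J a b) : (a ∈ Tset r I J ↔ b ∈ Tset r I J) := by
  have hconn := contrib_conn h
  have ha : a ∈ Finset.Icc 1 (2 * r + 1) := by
    rcases Finset.mem_union.1 (contrib_occ_left h) with h' | h'
    exacts [hIc h', hJc h']
  have hb : b ∈ Finset.Icc 1 (2 * r + 1) := by
    rcases Finset.mem_union.1 (contrib_occ_right h) with h' | h'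
    exacts [hIc h', hJc h']
  exact ⟨fun hT => mem_Tset_of_conn hT hconn hb,
         fun hT => mem_Tset_of_conn hT (conn_symm hconn) ha⟩

/-- occupied adjacent vertices have the same T-status -/
lemma occ_adj_T_iff {r : ℕ} {I J : Finset ℕ} (hI : Indep r I) (hJ : Indep r J)
    {a b : ℕ} (hadj : GrAdj r a b) (ha : a ∈ I ∪ J) (hb : b ∈ I ∪ J) :
    (a ∈ Tset r I J ↔ b ∈ Tset r I J) := by
  rcases lt_trichotomy a b with h | h | h
  · exact contrib_T_iff hI.1 hJ.1 (both_occ hI hJ hadj h ha hb)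
  · exact absurd h (gradj_ne hadj)
  · exact (contrib_T_iff hI.1 hJ.1 (both_occ hI hJ (gradj_symm hadj) h hb ha)).symm

/-- a vertex in both I and J is isolated: its block is a singleton -/
lemma blockOf_of_both {r : ℕ} {I J : Finset ℕ} (hI : Indep r I) (hJ : Indep r J)
    {w : ℕ} (hwI : w ∈ I) (hwJ : w ∈ J) : blockOf r I J w = {w} := by
  have hw : w ∈ Finset.Icc 1 (2 * r + 1) := hI.1 hwI
  -- no contributing edge touches w or straddles it
  have hkey : ∀ c, w - 1 ≤ c → c ≤ w → Clean r I J c := by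
    intro c hc1 hc2 a b hab ⟨hac, hcb⟩
    have hadj := hab.1
    have hlt := hab.2.1
    have hfacts := gradj_facts hadj hlt
    have haw : a ∈ I ∪ J := contrib_occ_left hab
    have hbw : b ∈ I ∪ J := contrib_occ_right hab
    -- a ≤ c ≤ w < ... ; edge straddles c which is w-1 or w
    -- cases: one endpoint is w, or a = w-1 ∧ b = w+1
    have hwmem : 1 ≤ w := by simp [Finset.mem_Icc] at hw; omega
    have hcases : a = w ∨ b = w ∨ (a + 1 ≤ w ∧ w + 1 ≤ b) := by omega
    -- w's neighbors cannot be occupied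
    have hnbr : ∀ z, GrAdj r w z → z ∉ I ∪ J := by
      intro z hz hzmem
      rcases Finset.mem_union.1 hzmem with h' | h'
      · exact hI.2 w hwI z h' hz
      · exact hJ.2 w hwJ z h' hz
    rcases hcases with h1 | h1 | h1
    · subst h1; exact hnbr b hadj hbw
    · subst h1; exact hnbr a (gradj_symm hadj) haw
    · -- a = w - 1, b = w + 1
      have ha' : a = w - 1 := by omega
      have hb' : b = w + 1 := by omega
      subst ha'; subst hb'
      exact hnbr (w - 1) (gradj_symm (by
        have : GrAdj r (w - 1) (w - 1 + 1) := gradj_consec (by omega) (by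
          simp [Finset.mem_Icc] at hw; omega)
        simpa [Nat.sub_add_cancel hwmem] using this)) haw
  ext z
  simp only [mem_blockOf, Finset.mem_singleton]
  constructor
  · rintro ⟨hz, hc⟩
    by_contra hne
    rcases lt_trichotomy z w with h | h | h
    · exact hc (w - 1) (by omega) (by omega) (hkey (w - 1) le_rfl (by omega))
    · exact hne h
    · exact hc w (by omega) (by omega) (hkey w (by omega) le_rfl)
  · rintro rfl; exact ⟨hw, conn_refl r I J z⟩

end EpsAux

namespace EpsAux

open scoped Classical

variable {r : ℕ} {I J : Finset ℕ}

noncomputable def swapSet (T A B : Finset ℕ) : Finset ℕ := (A \ T) ∪ (B ∩ T)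

lemma mem_swapSet {T A B : Finset ℕ} {v : ℕ} :
    v ∈ swapSet T A B ↔ (v ∈ T ∧ v ∈ B) ∨ (v ∉ T ∧ v ∈ A) := by
  simp only [swapSet, Finset.mem_union, Finset.mem_sdiff, Finset.mem_inter]
  tauto

lemma swapSet_union (T A B : Finset ℕ) : swapSet T A B ∪ swapSet T B A = A ∪ B := by
  ext v
  simp only [Finset.mem_union, mem_swapSet]
  tauto

lemma swap_indep (hI : Indep r I) (hJ : Indep r J) :
    Indep r (swapSet (Tset r I J) I J) ∧ Indep r (swapSet (Tset r I J) J I) := by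
  have key : ∀ A B : Finset ℕ, Indep r A → Indep r B →
      (∀ v, v ∈ A ∪ B ↔ v ∈ I ∪ J) → Indep r (swapSet (Tset r I J) A B) := by
    intro A B hA hB hU
    constructor
    · intro v hv
      rcases mem_swapSet.1 hv with ⟨_, h⟩ | ⟨_, h⟩
      exacts [hB.1 h, hA.1 h]
    · intro a ha b hb hadj
      have ha' : a ∈ I ∪ J := by
        refine (hU a).1 ?_
        rcases mem_swapSet.1 ha with ⟨_, h⟩ | ⟨_, h⟩ <;> simp [h]
      have hb' : b ∈ I ∪ J := by
        refine (hU b).1 ?_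
        rcases mem_swapSet.1 hb with ⟨_, h⟩ | ⟨_, h⟩ <;> simp [h]
      have hstat := occ_adj_T_iff hI hJ hadj ha' hb'
      rcases mem_swapSet.1 ha with ⟨haT, haB⟩ | ⟨haT, haA⟩ <;>
        rcases mem_swapSet.1 hb with ⟨hbT, hbB⟩ | ⟨hbT, hbA⟩
      · exact hB.2 a haB b hbB hadj
      · exact hbT (hstat.1 haT)
      · exact haT (hstat.2 hbT)
      · exact hA.2 a haA b hbA hadj
  refine ⟨key I J hI hJ (fun v => Iff.rfl), key J I hJ hI ?_⟩
  intro v; simp only [Finset.mem_union]; tauto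

lemma swap_union_eq (hI : Indep r I) (hJ : Indep r J) :
    swapSet (Tset r I J) I J ∪ swapSet (Tset r I J) J I = I ∪ J := swapSet_union _ _ _

/-- the contributing edges are the same after the swap -/
lemma contrib_swap (hI : Indep r I) (hJ : Indep r J) (a b : ℕ) :
    Contrib r (swapSet (Tset r I J) I J) (swapSet (Tset r I J) J I) a b ↔ Contrib r I J a b := by
  have hI' := (swap_indep hI hJ).1
  have hJ' := (swap_indep hI hJ).2
  constructor
  · intro h
    have ha : a ∈ I ∪ J := by
      rw [← swap_union_eq hI hJ]; exact contrib_occ_left h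
    have hb : b ∈ I ∪ J := by
      rw [← swap_union_eq hI hJ]; exact contrib_occ_right h
    exact both_occ hI hJ h.1 h.2.1 ha hb
  · intro h
    have ha : a ∈ swapSet (Tset r I J) I J ∪ swapSet (Tset r I J) J I := by
      rw [swap_union_eq hI hJ]; exact contrib_occ_left h
    have hb : b ∈ swapSet (Tset r I J) I J ∪ swapSet (Tset r I J) J I := by
      rw [swap_union_eq hI hJ]; exact contrib_occ_right h
    exact both_occ hI' hJ' h.1 h.2.1 ha hb

lemma clean_swap (hI : Indep r I) (hJ : Indep r J) (c : ℕ) :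
    Clean r (swapSet (Tset r I J) I J) (swapSet (Tset r I J) J I) c ↔ Clean r I J c := by
  unfold Clean
  constructor <;> intro h a b hab
  · exact h a b ((contrib_swap hI hJ a b).2 hab)
  · exact h a b ((contrib_swap hI hJ a b).1 hab)

lemma conn_swap (hI : Indep r I) (hJ : Indep r J) (v w : ℕ) :
    Conn r (swapSet (Tset r I J) I J) (swapSet (Tset r I J) J I) v w ↔ Conn r I J v w := by
  unfold Conn
  constructor <;> intro h c h1 h2 hcl
  · exact h c h1 h2 ((clean_swap hI hJ c).2 hcl)
  · exact h c h1 h2 ((clean_swap hI hJ c).1 hcl)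

lemma blockOf_swap (hI : Indep r I) (hJ : Indep r J) (v : ℕ) :
    blockOf r (swapSet (Tset r I J) I J) (swapSet (Tset r I J) J I) v = blockOf r I J v := by
  ext z
  simp only [mem_blockOf, conn_swap hI hJ]

/-- every element of the block of a T-element lies in T -/
lemma block_subset_T {v : ℕ} (hv : v ∈ Tset r I J) : blockOf r I J v ⊆ Tset r I J := by
  intro w hw
  rcases mem_blockOf.1 hw with ⟨hw1, hw2⟩
  exact mem_Tset_of_conn hv hw2 hw1

/-- blocks of non-T vertices are disjoint from T -/
lemma block_disj_T {v : ℕ} (hv : v ∈ Finset.Icc 1 (2 * r + 1)) (hv' : v ∉ Tset r I J) :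
    ∀ w ∈ blockOf r I J v, w ∉ Tset r I J := by
  intro w hw hwT
  rcases mem_blockOf.1 hw with ⟨hw1, hw2⟩
  exact hv' (mem_Tset_of_conn hwT (conn_symm hw2) hv)

lemma Tset_swap (hI : Indep r I) (hJ : Indep r J) :
    Tset r (swapSet (Tset r I J) I J) (swapSet (Tset r I J) J I) = Tset r I J := by
  set T := Tset r I J with hT
  set I' := swapSet T I J with hI'def
  set J' := swapSet T J I with hJ'def
  ext v
  constructor
  · intro hv'
    rcases mem_Tset.1 hv' with ⟨hicc, ⟨a, b, hab, hca⟩, hcard⟩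
    rw [blockOf_swap hI hJ] at hcard
    have hab' := (contrib_swap hI hJ a b).1 hab
    have hca' := (conn_swap hI hJ v a).1 hca
    by_contra hvT
    have hdisj := block_disj_T (I := I) (J := J) hicc hvT
    have hIeq : I' ∩ blockOf r I J v = I ∩ blockOf r I J v := by
      ext z
      simp only [Finset.mem_inter]
      constructor
      · rintro ⟨hz1, hz2⟩
        refine ⟨?_, hz2⟩
        rcases mem_swapSet.1 hz1 with ⟨hzT, _⟩ | ⟨_, hzI⟩
        · exact absurd hzT (hdisj z hz2)
        · exact hzI
      · rintro ⟨hz1, hz2⟩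
        exact ⟨mem_swapSet.2 (Or.inr ⟨hdisj z hz2, hz1⟩), hz2⟩
    have hJeq : J' ∩ blockOf r I J v = J ∩ blockOf r I J v := by
      ext z
      simp only [Finset.mem_inter]
      constructor
      · rintro ⟨hz1, hz2⟩
        refine ⟨?_, hz2⟩
        rcases mem_swapSet.1 hz1 with ⟨hzT, _⟩ | ⟨_, hzJ⟩
        · exact absurd hzT (hdisj z hz2)
        · exact hzJ
      · rintro ⟨hz1, hz2⟩
        exact ⟨mem_swapSet.2 (Or.inr ⟨hdisj z hz2, hz1⟩), hz2⟩
    rw [hIeq, hJeq] at hcard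
    exact hvT (mem_Tset.2 ⟨hicc, ⟨a, b, hab', hca'⟩, hcard⟩)
  · intro hvT
    rcases mem_Tset.1 hvT with ⟨hicc, ⟨a, b, hab, hca⟩, hcard⟩
    refine mem_Tset.2 ⟨hicc, ⟨a, b, (contrib_swap hI hJ a b).2 hab,
      (conn_swap hI hJ v a).2 hca⟩, ?_⟩
    rw [blockOf_swap hI hJ]
    have hsub := block_subset_T hvT
    have hIeq : I' ∩ blockOf r I J v = J ∩ blockOf r I J v := by
      ext z
      simp only [Finset.mem_inter]
      constructor
      · rintro ⟨hz1, hz2⟩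
        refine ⟨?_, hz2⟩
        rcases mem_swapSet.1 hz1 with ⟨_, hzJ⟩ | ⟨hzT, _⟩
        · exact hzJ
        · exact absurd (hsub hz2) hzT
      · rintro ⟨hz1, hz2⟩
        exact ⟨mem_swapSet.2 (Or.inl ⟨hsub hz2, hz1⟩), hz2⟩
    have hJeq : J' ∩ blockOf r I J v = I ∩ blockOf r I J v := by
      ext z
      simp only [Finset.mem_inter]
      constructor
      · rintro ⟨hz1, hz2⟩
        refine ⟨?_, hz2⟩
        rcases mem_swapSet.1 hz1 with ⟨_, hzI⟩ | ⟨hzT, _⟩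
        · exact hzI
        · exact absurd (hsub hz2) hzT
      · rintro ⟨hz1, hz2⟩
        exact ⟨mem_swapSet.2 (Or.inl ⟨hsub hz2, hz1⟩), hz2⟩
    rw [hIeq, hJeq, hcard]

lemma swap_swap (hI : Indep r I) (hJ : Indep r J) :
    swapSet (Tset r (swapSet (Tset r I J) I J) (swapSet (Tset r I J) J I))
        (swapSet (Tset r I J) I J) (swapSet (Tset r I J) J I) = I ∧
    swapSet (Tset r (swapSet (Tset r I J) I J) (swapSet (Tset r I J) J I))
        (swapSet (Tset r I J) J I) (swapSet (Tset r I J) I J) = J := by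
  rw [Tset_swap hI hJ]
  constructor <;> ext v <;>
    simp only [mem_swapSet] <;>
    by_cases hv : v ∈ Tset r I J <;> simp [hv] <;> tauto

end EpsAux

namespace EpsAux

open scoped Classical

variable {r : ℕ} {I J : Finset ℕ}

lemma Tset_subset_Icc : Tset r I J ⊆ Finset.Icc 1 (2 * r + 1) := fun v hv => (mem_Tset.1 hv).1

/-- the T-parts of I and J have equal cardinality (per balanced block) -/
lemma card_inter_T : (I ∩ Tset r I J).card = (J ∩ Tset r I J).card := by
  classical
  set T := Tset r I J with hT
  have hmapI : ∀ x ∈ I ∩ T, blockOf r I J x ∈ T.image (blockOf r I J) := by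
    intro x hx
    exact Finset.mem_image_of_mem _ (Finset.mem_inter.1 hx).2
  have hmapJ : ∀ x ∈ J ∩ T, blockOf r I J x ∈ T.image (blockOf r I J) := by
    intro x hx
    exact Finset.mem_image_of_mem _ (Finset.mem_inter.1 hx).2
  rw [Finset.card_eq_sum_card_fiberwise hmapI, Finset.card_eq_sum_card_fiberwise hmapJ]
  refine Finset.sum_congr rfl ?_
  intro b hb
  rcases Finset.mem_image.1 hb with ⟨v₀, hv₀T, rfl⟩
  have hkey : ∀ (A : Finset ℕ),
      (A ∩ T).filter (fun x => blockOf r I J x = blockOf r I J v₀) = A ∩ blockOf r I J v₀ := by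
    intro A
    ext z
    simp only [Finset.mem_filter, Finset.mem_inter]
    constructor
    · rintro ⟨⟨hzA, hzT⟩, hbl⟩
      refine ⟨hzA, ?_⟩
      rw [← hbl]
      exact mem_blockOf_self (Tset_subset_Icc hzT)
    · rintro ⟨hzA, hzB⟩
      rcases mem_blockOf.1 hzB with ⟨hzicc, hconn⟩
      exact ⟨⟨hzA, mem_Tset_of_conn hv₀T hconn hzicc⟩,
        (blockOf_eq_of_conn hconn).symm⟩
  rw [hkey I, hkey J]
  exact (mem_Tset.1 hv₀T).2.2

lemma sdiff_inter_disj (T A B : Finset ℕ) : Disjoint (A \ T) (B ∩ T) := by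
  rw [Finset.disjoint_left]
  intro v hv hv'
  exact (Finset.mem_sdiff.1 hv).2 (Finset.mem_inter.1 hv').2

lemma swapSet_card_left : (swapSet (Tset r I J) I J).card = I.card := by
  rw [swapSet, Finset.card_union_of_disjoint (sdiff_inter_disj _ _ _), ← card_inter_T (I := I) (J := J)]
  have := Finset.card_sdiff_add_card_inter I (Tset r I J)
  omega

lemma swapSet_card_right : (swapSet (Tset r I J) J I).card = J.card := by
  rw [swapSet, Finset.card_union_of_disjoint (sdiff_inter_disj _ _ _),
    card_inter_T (I := I) (J := J)]
  have := Finset.card_sdiff_add_card_inter J (Tset r I J)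
  omega

lemma swapSet_prod {R : Type*} [CommRing R] (x : ℕ → R) :
    (∏ i ∈ swapSet (Tset r I J) I J, x i) * ∏ j ∈ swapSet (Tset r I J) J I, x j =
    (∏ i ∈ I, x i) * ∏ j ∈ J, x j := by
  have h1 : ∀ A B : Finset ℕ, ∏ i ∈ swapSet (Tset r I J) A B, x i =
      (∏ i ∈ A \ Tset r I J, x i) * ∏ i ∈ B ∩ Tset r I J, x i := by
    intro A B
    rw [swapSet, Finset.prod_union (sdiff_inter_disj _ _ _)]
  have h2 : ∀ A : Finset ℕ, (∏ i ∈ A \ Tset r I J, x i) * ∏ i ∈ A ∩ Tset r I J, x i =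
      ∏ i ∈ A, x i := by
    intro A
    rw [← Finset.prod_union (Finset.sdiff_disjoint.mono_right Finset.inter_subset_right)]
    congr 1
    ext z
    simp only [Finset.mem_union, Finset.mem_sdiff, Finset.mem_inter]
    tauto
  rw [h1, h1, ← h2 I, ← h2 J]
  ring

end EpsAux

namespace EpsAux

open scoped Classical

variable {r : ℕ} {I J : Finset ℕ}

def sg (I J : Finset ℕ) (v : ℕ) : ℤ :=
  (if v ∈ I then 1 else 0) - (if v ∈ J then 1 else 0)

lemma contrib_sg {u v : ℕ} (h : Contrib r I J u v)
    (hu : ¬(u ∈ I ∧ u ∈ J)) (hv : ¬(v ∈ I ∧ v ∈ J)) :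
    sg I J u + sg I J v = 0 ∧ (sg I J u = 1 ∨ sg I J u = -1) := by
  rcases h.2.2 with ⟨h1, h2⟩ | ⟨h1, h2⟩
  · have h3 : u ∉ J := fun hc => hu ⟨h1, hc⟩
    have h4 : v ∉ I := fun hc => hv ⟨hc, h2⟩
    simp [sg, h1, h2, h3, h4]
  · have h3 : u ∉ I := fun hc => hu ⟨hc, h1⟩
    have h4 : v ∉ J := fun hc => hv ⟨h2, hc⟩
    simp [sg, h1, h2, h3, h4]

lemma interval_subset_block {v₀ u v z : ℕ}
    (hu : u ∈ blockOf r I J v₀) (hv : v ∈ blockOf r I J v₀)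
    (h1 : u ≤ z) (h2 : z ≤ v) : z ∈ blockOf r I J v₀ := by
  rcases mem_blockOf.1 hu with ⟨huicc, hcu⟩
  rcases mem_blockOf.1 hv with ⟨hvicc, hcv⟩
  simp only [Finset.mem_Icc] at huicc hvicc
  refine mem_blockOf.2 ⟨Finset.mem_Icc.2 ⟨by omega, by omega⟩, ?_⟩
  have hcuv : Conn r I J u v := conn_trans (conn_symm hcu) hcv
  exact conn_trans hcu (conn_of_between hcuv h1 h2)

/-- consecutive occupied vertices in a block form a contributing edge -/
lemma consec_contrib (hI : Indep r I) (hJ : Indep r J) {v₀ u v : ℕ}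
    (hu : u ∈ (I ∪ J) ∩ blockOf r I J v₀) (hv : v ∈ (I ∪ J) ∩ blockOf r I J v₀)
    (huv : u < v) (hno : ∀ w ∈ (I ∪ J) ∩ blockOf r I J v₀, ¬(u < w ∧ w < v)) :
    Contrib r I J u v := by
  rcases Finset.mem_inter.1 hu with ⟨huocc, huB⟩
  rcases Finset.mem_inter.1 hv with ⟨hvocc, hvB⟩
  have huicc : u ∈ Finset.Icc 1 (2 * r + 1) := (mem_blockOf.1 huB).1
  have hvicc : v ∈ Finset.Icc 1 (2 * r + 1) := (mem_blockOf.1 hvB).1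
  simp only [Finset.mem_Icc] at huicc hvicc
  have hnoocc : ∀ z, u < z → z < v → z ∉ I ∪ J := by
    intro z hz1 hz2 hzocc
    exact hno z (Finset.mem_inter.2 ⟨hzocc,
      interval_subset_block huB hvB (by omega) (by omega)⟩) ⟨hz1, hz2⟩
  rcases Nat.lt_or_ge u.succ v with hcase | hcase
  · -- v ≥ u + 2 : use the cut at u
    have hconn : Conn r I J u v :=
      conn_trans (conn_symm (mem_blockOf.1 huB).2) (mem_blockOf.1 hvB).2
    have hnc : ¬ Clean r I J u := hconn u (by omega) (by omega)
    rw [Clean] at hnc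
    push_neg at hnc
    rcases hnc with ⟨a, b, hab, hau, hub⟩
    have hfacts := gradj_facts hab.1 hab.2.1
    have hbocc := contrib_occ_right hab
    have hbB : b ∈ blockOf r I J v₀ :=
      interval_subset_block huB hvB (by omega) (by omega)
    have hbv : b = v := by
      by_contra hne
      exact hnoocc b (by omega) (by omega) hbocc
    subst hbv
    have hav : a = u := by omega
    subst hav
    exact hab
  · -- v = u + 1
    have hv1 : v = u + 1 := by omega
    subst hv1
    exact both_occ hI hJ (gradj_consec (by omega) (by omega)) huv huocc hvocc

/-- the central chain lemma: an unbalanced block has zero internal weight -/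
lemma block_sum_zero (hI : Indep r I) (hJ : Indep r J) (v₀ : ℕ)
    (hcard : (I ∩ blockOf r I J v₀).card ≠ (J ∩ blockOf r I J v₀).card) :
    ∑ i ∈ I ∩ blockOf r I J v₀, ∑ j ∈ J ∩ blockOf r I J v₀, epsPair r i j = 0 := by
  classical
  set B := blockOf r I J v₀ with hB
  set O := (I ∪ J) ∩ B with hO
  have hIB_sub : I ∩ B ⊆ O := by
    intro z hz
    rcases Finset.mem_inter.1 hz with ⟨h1, h2⟩
    exact Finset.mem_inter.2 ⟨Finset.mem_union_left _ h1, h2⟩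
  have hJB_sub : J ∩ B ⊆ O := by
    intro z hz
    rcases Finset.mem_inter.1 hz with ⟨h1, h2⟩
    exact Finset.mem_inter.2 ⟨Finset.mem_union_right _ h1, h2⟩
  -- O is nonempty
  have hne : O.Nonempty := by
    by_contra hemp
    rw [Finset.not_nonempty_iff_eq_empty] at hemp
    have h1 : I ∩ B = ∅ := Finset.subset_empty.1 (hemp ▸ hIB_sub)
    have h2 : J ∩ B = ∅ := Finset.subset_empty.1 (hemp ▸ hJB_sub)
    rw [h1, h2] at hcard
    exact hcard rfl
  -- no vertex of the block is in both I and J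
  have hnb : ∀ w ∈ O, ¬(w ∈ I ∧ w ∈ J) := by
    rintro w hw ⟨hwI, hwJ⟩
    rcases Finset.mem_inter.1 hw with ⟨_, hwB⟩
    have hbe : B = {w} := by
      rw [hB, blockOf_eq_of_conn (mem_blockOf.1 hwB).2]
      exact blockOf_of_both hI hJ hwI hwJ
    apply hcard
    rw [hbe, Finset.inter_singleton_of_mem hwI, Finset.inter_singleton_of_mem hwJ]
  have hsgpm : ∀ w ∈ O, sg I J w = 1 ∨ sg I J w = -1 := by
    intro w hw
    rcases Finset.mem_inter.1 hw with ⟨hwocc, _⟩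
    have := hnb w hw
    rcases Finset.mem_union.1 hwocc with h | h
    · have h2 : w ∉ J := fun hc => this ⟨h, hc⟩
      left; simp [sg, h, h2]
    · have h2 : w ∉ I := fun hc => this ⟨hc, h⟩
      right; simp [sg, h, h2]
  -- no contributing edge skips over an occupied vertex
  have hnoskip : ∀ a u b, a ∈ O → u ∈ O → b ∈ O → a < u → u < b → ¬ GrAdj r a b := by
    intro a u b ha hu hb h1 h2 hadj
    have haocc := (Finset.mem_inter.1 ha).1
    have huocc := (Finset.mem_inter.1 hu).1
    have hbocc := (Finset.mem_inter.1 hb).1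
    have haicc := (mem_blockOf.1 (Finset.mem_inter.1 ha).2).1
    have hbicc := (mem_blockOf.1 (Finset.mem_inter.1 hb).2).1
    simp only [Finset.mem_Icc] at haicc hbicc
    have hfacts := gradj_facts hadj (by omega)
    have hb2 : b = a + 2 := by omega
    have hu1 : u = a + 1 := by omega
    have c1 : Contrib r I J a u :=
      both_occ hI hJ (by rw [hu1]; exact gradj_consec (by omega) (by omega)) (by omega) haocc huocc
    have c2 : Contrib r I J u b :=
      both_occ hI hJ (by rw [hu1, hb2]; exact gradj_consec (by omega) (by omega)) (by omega)
        huocc hbocc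
    have c3 : Contrib r I J a b := both_occ hI hJ hadj (by omega) haocc hbocc
    have e1 := contrib_sg c1 (hnb a ha) (hnb u hu)
    have e2 := contrib_sg c2 (hnb u hu) (hnb b hb)
    have e3 := contrib_sg c3 (hnb a ha) (hnb b hb)
    omega
  set mO := O.min' hne with hmO
  have hmO_mem : mO ∈ O := O.min'_mem hne
  -- the chain induction
  have key : ∀ N : ℕ, ∀ v, v ∈ O → v ≤ N →
      2 * (∑ w ∈ O.filter (· ≤ v), sg I J w) = sg I J mO + sg I J v ∧
      2 * (∑ i ∈ (I ∩ B).filter (· ≤ v), ∑ j ∈ (J ∩ B).filter (· ≤ v), epsPair r i j) =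
        sg I J mO - sg I J v := by
    intro N
    induction N with
    | zero =>
      intro v hv hle
      have hvicc := (mem_blockOf.1 (Finset.mem_inter.1 hv).2).1
      simp only [Finset.mem_Icc] at hvicc
      omega
    | succ N ih =>
      intro v hv _hle
      by_cases hbase : v = mO
      · have hminle : ∀ w ∈ O, v ≤ w := by
          intro w hw
          rw [hbase]; exact O.min'_le w hw
        have hfO : O.filter (· ≤ v) = {v} := by
          ext w
          simp only [Finset.mem_filter, Finset.mem_singleton]
          constructor
          · rintro ⟨hw, hle⟩
            exact le_antisymm hle (hminle w hw)
          · rintro rfl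
            exact ⟨hv, le_rfl⟩
        constructor
        · rw [hfO, Finset.sum_singleton, hbase]; ring
        · have hvocc := (Finset.mem_inter.1 hv).1
          have hzero : (∑ i ∈ (I ∩ B).filter (· ≤ v), ∑ j ∈ (J ∩ B).filter (· ≤ v),
              epsPair r i j) = 0 := by
            rcases Finset.mem_union.1 hvocc with hvI | hvJ
            · have : (J ∩ B).filter (· ≤ v) = ∅ := by
                rw [Finset.eq_empty_iff_forall_notMem]
                intro z hz
                rcases Finset.mem_filter.1 hz with ⟨hz1, hz2⟩
                have hzO := hJB_sub hz1
                have : z = v := le_antisymm hz2 (hminle z hzO)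
                subst this
                exact hnb z hzO ⟨hvI, (Finset.mem_inter.1 hz1).1⟩
              rw [this]
              simp
            · have : (I ∩ B).filter (· ≤ v) = ∅ := by
                rw [Finset.eq_empty_iff_forall_notMem]
                intro z hz
                rcases Finset.mem_filter.1 hz with ⟨hz1, hz2⟩
                have hzO := hIB_sub hz1
                have : z = v := le_antisymm hz2 (hminle z hzO)
                subst this
                exact hnb z hzO ⟨(Finset.mem_inter.1 hz1).1, hvJ⟩
              rw [this]
              simp
          rw [hzero, hbase]
          ring
      · -- inductive step
        have hlt : mO < v := lt_of_le_of_ne (O.min'_le v hv) (Ne.symm hbase)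
        have hOlt : (O.filter (· < v)).Nonempty :=
          ⟨mO, Finset.mem_filter.2 ⟨hmO_mem, hlt⟩⟩
        set u := (O.filter (· < v)).max' hOlt with hu_def
        have hu_mem' := (O.filter (· < v)).max'_mem hOlt
        rcases Finset.mem_filter.1 hu_mem' with ⟨huO, huv⟩
        have hmax : ∀ w ∈ O, w < v → w ≤ u := fun w hw hwv =>
          (O.filter (· < v)).le_max' w (Finset.mem_filter.2 ⟨hw, hwv⟩)
        have hno : ∀ w ∈ O, ¬(u < w ∧ w < v) := by
          rintro w hw ⟨h1, h2⟩
          exact absurd (hmax w hw h2) (by omega)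
        have hcontrib : Contrib r I J u v := consec_contrib hI hJ huO hv huv hno
        have hsg := contrib_sg hcontrib (hnb u huO) (hnb v hv)
        have hvicc := (mem_blockOf.1 (Finset.mem_inter.1 hv).2).1
        have huicc := (mem_blockOf.1 (Finset.mem_inter.1 huO).2).1
        simp only [Finset.mem_Icc] at hvicc huicc
        obtain ⟨IH1, IH2⟩ := ih u huO (by omega)
        have hOsplit : O.filter (· ≤ v) = insert v (O.filter (· ≤ u)) := by
          ext w
          simp only [Finset.mem_filter, Finset.mem_insert]
          constructor
          · rintro ⟨hw, hle⟩
            rcases eq_or_lt_of_le hle with h | h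
            · exact Or.inl h
            · exact Or.inr ⟨hw, hmax w hw h⟩
          · rintro (rfl | ⟨hw, hle⟩)
            · exact ⟨hv, le_rfl⟩
            · exact ⟨hw, by omega⟩
        have hvnotin : v ∉ O.filter (· ≤ u) := by
          intro hc
          exact absurd (Finset.mem_filter.1 hc).2 (by omega)
        constructor
        · rw [hOsplit, Finset.sum_insert hvnotin]
          omega
        · -- the weight identity
          rcases hcontrib.2.2 with ⟨huI, hvJ⟩ | ⟨huJ, hvI⟩
          · -- u ∈ I, v ∈ J
            have hvI' : v ∉ I := fun hc => hnb v hv ⟨hc, hvJ⟩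
            have huJ' : u ∉ J := fun hc => hnb u huO ⟨huI, hc⟩
            have hIeq : (I ∩ B).filter (· ≤ v) = (I ∩ B).filter (· ≤ u) := by
              ext z
              simp only [Finset.mem_filter]
              constructor
              · rintro ⟨hz, hle⟩
                refine ⟨hz, ?_⟩
                have hzO := hIB_sub hz
                rcases eq_or_lt_of_le hle with h | h
                · exact absurd ((h : z = v) ▸ (Finset.mem_inter.1 hz).1) hvI'
                · exact hmax z hzO h
              · rintro ⟨hz, hle⟩
                exact ⟨hz, by omega⟩
            have hJeq : (J ∩ B).filter (· ≤ v) = insert v ((J ∩ B).filter (· ≤ u)) := by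
              ext z
              simp only [Finset.mem_filter, Finset.mem_insert]
              constructor
              · rintro ⟨hz, hle⟩
                rcases eq_or_lt_of_le hle with h | h
                · exact Or.inl h
                · exact Or.inr ⟨hz, hmax z (hJB_sub hz) h⟩
              · rintro (rfl | ⟨hz, hle⟩)
                · exact ⟨Finset.mem_inter.2 ⟨hvJ, (Finset.mem_inter.1 hv).2⟩, le_rfl⟩
                · exact ⟨hz, by omega⟩
            have hvnotin' : v ∉ (J ∩ B).filter (· ≤ u) := by
              intro hc
              exact absurd (Finset.mem_filter.1 hc).2 (by omega)
            rw [hIeq, hJeq]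
            have hsum : ∀ i ∈ (I ∩ B).filter (· ≤ u),
                ∑ j ∈ insert v ((J ∩ B).filter (· ≤ u)), epsPair r i j =
                epsPair r i v + ∑ j ∈ (J ∩ B).filter (· ≤ u), epsPair r i j := by
              intro i _
              rw [Finset.sum_insert hvnotin']
            rw [Finset.sum_congr rfl hsum, Finset.sum_add_distrib]
            have hcol : ∑ i ∈ (I ∩ B).filter (· ≤ u), epsPair r i v = 1 := by
              rw [Finset.sum_eq_single u]
              · unfold epsPair
                rw [if_pos hcontrib.1, if_pos hcontrib.2.1]
              · intro z hz hzne
                rcases Finset.mem_filter.1 hz with ⟨hz1, hz2⟩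
                have hzO := hIB_sub hz1
                have hzu : z < u := lt_of_le_of_ne hz2 hzne
                by_cases hadj : GrAdj r z v
                · exact absurd hadj (hnoskip z u v hzO huO hv hzu (by omega))
                · exact eps_eq_zero_of_not_adj hadj
              · intro hc
                exfalso
                apply hc
                simp only [Finset.mem_filter, Finset.mem_inter]
                exact ⟨⟨huI, (Finset.mem_inter.1 huO).2⟩, le_rfl⟩
            rw [hcol]
            have hsgv : sg I J v = -1 := by
              simp [sg, hvJ, hvI']
            omega
          · -- u ∈ J, v ∈ I
            have hvJ' : v ∉ J := fun hc => hnb v hv ⟨hvI, hc⟩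
            have huI' : u ∉ I := fun hc => hnb u huO ⟨hc, huJ⟩
            have hJeq : (J ∩ B).filter (· ≤ v) = (J ∩ B).filter (· ≤ u) := by
              ext z
              simp only [Finset.mem_filter]
              constructor
              · rintro ⟨hz, hle⟩
                refine ⟨hz, ?_⟩
                have hzO := hJB_sub hz
                rcases eq_or_lt_of_le hle with h | h
                · exact absurd ((h : z = v) ▸ (Finset.mem_inter.1 hz).1) hvJ'
                · exact hmax z hzO h
              · rintro ⟨hz, hle⟩
                exact ⟨hz, by omega⟩
            have hIeq : (I ∩ B).filter (· ≤ v) = insert v ((I ∩ B).filter (· ≤ u)) := by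
              ext z
              simp only [Finset.mem_filter, Finset.mem_insert]
              constructor
              · rintro ⟨hz, hle⟩
                rcases eq_or_lt_of_le hle with h | h
                · exact Or.inl h
                · exact Or.inr ⟨hz, hmax z (hIB_sub hz) h⟩
              · rintro (rfl | ⟨hz, hle⟩)
                · exact ⟨Finset.mem_inter.2 ⟨hvI, (Finset.mem_inter.1 hv).2⟩, le_rfl⟩
                · exact ⟨hz, by omega⟩
            have hvnotin' : v ∉ (I ∩ B).filter (· ≤ u) := by
              intro hc
              exact absurd (Finset.mem_filter.1 hc).2 (by omega)
            rw [hIeq, hJeq, Finset.sum_insert hvnotin']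
            have hrow : ∑ j ∈ (J ∩ B).filter (· ≤ u), epsPair r v j = -1 := by
              rw [Finset.sum_eq_single u]
              · unfold epsPair
                rw [if_pos (gradj_symm hcontrib.1), if_neg (by omega : ¬ v < u)]
              · intro z hz hzne
                rcases Finset.mem_filter.1 hz with ⟨hz1, hz2⟩
                have hzO := hJB_sub hz1
                have hzu : z < u := lt_of_le_of_ne hz2 hzne
                by_cases hadj : GrAdj r v z
                · exact absurd (gradj_symm hadj) (hnoskip z u v hzO huO hv hzu (by omega))
                · exact eps_eq_zero_of_not_adj hadj
              · intro hc
                exfalso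
                apply hc
                simp only [Finset.mem_filter, Finset.mem_inter]
                exact ⟨⟨huJ, (Finset.mem_inter.1 huO).2⟩, le_rfl⟩
            rw [hrow]
            have hsgv : sg I J v = 1 := by
              simp [sg, hvI, hvJ']
            omega
  -- conclude from the identities at the maximum
  set Mx := O.max' hne with hMx
  have hMx_mem : Mx ∈ O := O.max'_mem hne
  obtain ⟨k1, k2⟩ := key Mx Mx hMx_mem le_rfl
  have hImax : (I ∩ B).filter (· ≤ Mx) = I ∩ B := by
    apply Finset.filter_true_of_mem
    intro z hz
    exact O.le_max' z (hIB_sub hz)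
  have hJmax : (J ∩ B).filter (· ≤ Mx) = J ∩ B := by
    apply Finset.filter_true_of_mem
    intro z hz
    exact O.le_max' z (hJB_sub hz)
  have hOmax : O.filter (· ≤ Mx) = O := by
    apply Finset.filter_true_of_mem
    intro z hz
    exact O.le_max' z hz
  rw [hImax, hJmax] at k2
  rw [hOmax] at k1
  -- total sg sum equals the card difference
  have hsum_sg : ∑ w ∈ O, sg I J w = ((I ∩ B).card : ℤ) - ((J ∩ B).card : ℤ) := by
    unfold sg
    rw [Finset.sum_sub_distrib]
    congr 1
    · rw [Finset.sum_ite_mem]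
      have : O ∩ I = I ∩ B := by
        ext z
        simp only [Finset.mem_inter, hO, Finset.mem_union]
        tauto
      rw [this, Finset.sum_const, nsmul_eq_mul, mul_one]
    · rw [Finset.sum_ite_mem]
      have : O ∩ J = J ∩ B := by
        ext z
        simp only [Finset.mem_inter, hO, Finset.mem_union]
        tauto
      rw [this, Finset.sum_const, nsmul_eq_mul, mul_one]
  rw [hsum_sg] at k1
  have hc1 : ((I ∩ B).card : ℤ) ≠ ((J ∩ B).card : ℤ) := by
    intro hc
    exact hcard (Nat.cast_injective hc)
  have h1 := hsgpm mO hmO_mem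
  have h2 := hsgpm Mx hMx_mem
  omega

end EpsAux

namespace EpsAux

open scoped Classical

variable {r : ℕ} {I J : Finset ℕ}

/-- the structural lemma: contributions outside T vanish -/
lemma A_zero (hI : Indep r I) (hJ : Indep r J) :
    ∑ i ∈ I \ Tset r I J, ∑ j ∈ J \ Tset r I J, epsPair r i j = 0 := by
  classical
  have hinner : ∀ i ∈ I \ Tset r I J, (∑ j ∈ J \ Tset r I J, epsPair r i j) =
      ∑ j ∈ J ∩ blockOf r I J i, epsPair r i j := by
    intro i hi
    rcases Finset.mem_sdiff.1 hi with ⟨hiI, hiT⟩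
    have hiocc : i ∈ I ∪ J := Finset.mem_union_left _ hiI
    have h1 : ∑ j ∈ J \ Tset r I J, epsPair r i j = ∑ j ∈ J, epsPair r i j := by
      apply Finset.sum_subset Finset.sdiff_subset
      intro j hjJ hjns
      have hjT : j ∈ Tset r I J := by
        by_contra hc
        exact hjns (Finset.mem_sdiff.2 ⟨hjJ, hc⟩)
      by_cases hadj : GrAdj r i j
      · exact absurd ((occ_adj_T_iff hI hJ hadj hiocc (Finset.mem_union_right _ hjJ)).2 hjT) hiT
      · exact eps_eq_zero_of_not_adj hadj
    have h2 : ∑ j ∈ J ∩ blockOf r I J i, epsPair r i j = ∑ j ∈ J, epsPair r i j := by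
      apply Finset.sum_subset Finset.inter_subset_left
      intro j hjJ hjns
      have hjB : j ∉ blockOf r I J i := by
        intro hc
        exact hjns (Finset.mem_inter.2 ⟨hjJ, hc⟩)
      by_cases hadj : GrAdj r i j
      · exfalso
        apply hjB
        have hjocc : j ∈ I ∪ J := Finset.mem_union_right _ hjJ
        have hconn : Conn r I J i j := by
          rcases lt_trichotomy i j with h | h | h
          · exact contrib_conn (both_occ hI hJ hadj h hiocc hjocc)
          · exact absurd h (gradj_ne hadj)
          · exact conn_symm (contrib_conn (both_occ hI hJ (gradj_symm hadj) h hjocc hiocc))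
        exact mem_blockOf.2 ⟨hJ.1 hjJ, hconn⟩
      · exact eps_eq_zero_of_not_adj hadj
    rw [h1, h2]
  rw [Finset.sum_congr rfl hinner]
  have hmaps : ∀ i ∈ I \ Tset r I J, blockOf r I J i ∈ (I \ Tset r I J).image (blockOf r I J) :=
    fun i hi => Finset.mem_image_of_mem _ hi
  rw [← Finset.sum_fiberwise_of_maps_to hmaps]
  refine Finset.sum_eq_zero ?_
  intro b hb
  rcases Finset.mem_image.1 hb with ⟨v₀, hv₀, rfl⟩
  rcases Finset.mem_sdiff.1 hv₀ with ⟨hv₀I, hv₀T⟩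
  have hv₀icc : v₀ ∈ Finset.Icc 1 (2 * r + 1) := hI.1 hv₀I
  have hfib : (I \ Tset r I J).filter (fun i => blockOf r I J i = blockOf r I J v₀) =
      I ∩ blockOf r I J v₀ := by
    ext z
    simp only [Finset.mem_filter, Finset.mem_sdiff, Finset.mem_inter]
    constructor
    · rintro ⟨⟨hzI, hzT⟩, hbl⟩
      exact ⟨hzI, hbl ▸ mem_blockOf_self (hI.1 hzI)⟩
    · rintro ⟨hzI, hzB⟩
      rcases mem_blockOf.1 hzB with ⟨hzicc, hconn⟩
      refine ⟨⟨hzI, fun hc => hv₀T (mem_Tset_of_conn hc (conn_symm hconn) hv₀icc)⟩,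
        (blockOf_eq_of_conn hconn).symm⟩
  have hsummand : ∀ i ∈ (I \ Tset r I J).filter (fun i => blockOf r I J i = blockOf r I J v₀),
      (∑ j ∈ J ∩ blockOf r I J i, epsPair r i j) =
      ∑ j ∈ J ∩ blockOf r I J v₀, epsPair r i j := by
    intro i hi
    rw [(Finset.mem_filter.1 hi).2]
  rw [Finset.sum_congr rfl hsummand, hfib]
  by_cases hedge : ∃ a b', Contrib r I J a b' ∧ Conn r I J v₀ a
  · have hcard : (I ∩ blockOf r I J v₀).card ≠ (J ∩ blockOf r I J v₀).card := by
      intro hc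
      exact hv₀T (mem_Tset.2 ⟨hv₀icc, hedge, hc⟩)
    exact block_sum_zero hI hJ v₀ hcard
  · refine Finset.sum_eq_zero ?_
    intro i hi
    refine Finset.sum_eq_zero ?_
    intro j hj
    rcases Finset.mem_inter.1 hi with ⟨hiI, hiB⟩
    rcases Finset.mem_inter.1 hj with ⟨hjJ, hjB⟩
    have hiocc : i ∈ I ∪ J := Finset.mem_union_left _ hiI
    have hjocc : j ∈ I ∪ J := Finset.mem_union_right _ hjJ
    by_cases hadj : GrAdj r i j
    · exfalso
      apply hedge
      rcases lt_trichotomy i j with h | h | h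
      · exact ⟨i, j, both_occ hI hJ hadj h hiocc hjocc, (mem_blockOf.1 hiB).2⟩
      · exact absurd h (gradj_ne hadj)
      · exact ⟨j, i, both_occ hI hJ (gradj_symm hadj) h hjocc hiocc, (mem_blockOf.1 hjB).2⟩
    · exact eps_eq_zero_of_not_adj hadj

/-- the weight is negated by the swap -/
lemma W_swap (hI : Indep r I) (hJ : Indep r J) :
    ∑ i ∈ swapSet (Tset r I J) I J, ∑ j ∈ swapSet (Tset r I J) J I, epsPair r i j =
    - ∑ i ∈ I, ∑ j ∈ J, epsPair r i j := by
  classical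
  have hsplit : ∀ (A : Finset ℕ) (f : ℕ → ℤ),
      ∑ a ∈ A, f a = (∑ a ∈ A ∩ Tset r I J, f a) + ∑ a ∈ A \ Tset r I J, f a := by
    intro A f
    rw [← Finset.sum_union (Finset.sdiff_disjoint.symm.mono_left Finset.inter_subset_right)]
    congr 1
    ext z
    simp only [Finset.mem_union, Finset.mem_inter, Finset.mem_sdiff]
    tauto
  have hsame : ∀ (A S1 S2 : Finset ℕ), Indep r A → S1 ⊆ A → S2 ⊆ A →
      ∑ i ∈ S1, ∑ j ∈ S2, epsPair r i j = 0 := by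
    intro A S1 S2 hA h1 h2
    refine Finset.sum_eq_zero fun i hi => Finset.sum_eq_zero fun j hj => ?_
    by_cases hadj : GrAdj r i j
    · exact absurd hadj (hA.2 i (h1 hi) j (h2 hj))
    · exact eps_eq_zero_of_not_adj hadj
  have hcross : ∀ (S1 S2 : Finset ℕ), (∀ i ∈ S1, i ∈ I ∪ J) → (∀ j ∈ S2, j ∈ I ∪ J) →
      (∀ i ∈ S1, i ∈ Tset r I J) → (∀ j ∈ S2, j ∉ Tset r I J) →
      ∑ i ∈ S1, ∑ j ∈ S2, epsPair r i j = 0 := by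
    intro S1 S2 h1 h2 h3 h4
    refine Finset.sum_eq_zero fun i hi => Finset.sum_eq_zero fun j hj => ?_
    by_cases hadj : GrAdj r i j
    · exact absurd ((occ_adj_T_iff hI hJ hadj (h1 i hi) (h2 j hj)).1 (h3 i hi)) (h4 j hj)
    · exact eps_eq_zero_of_not_adj hadj
  have hcross' : ∀ (S1 S2 : Finset ℕ), (∀ i ∈ S1, i ∈ I ∪ J) → (∀ j ∈ S2, j ∈ I ∪ J) →
      (∀ i ∈ S1, i ∉ Tset r I J) → (∀ j ∈ S2, j ∈ Tset r I J) →
      ∑ i ∈ S1, ∑ j ∈ S2, epsPair r i j = 0 := by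
    intro S1 S2 h1 h2 h3 h4
    refine Finset.sum_eq_zero fun i hi => Finset.sum_eq_zero fun j hj => ?_
    by_cases hadj : GrAdj r i j
    · exact absurd ((occ_adj_T_iff hI hJ hadj (h1 i hi) (h2 j hj)).2 (h4 j hj)) (h3 i hi)
    · exact eps_eq_zero_of_not_adj hadj
  -- decompose the left-hand side
  have eL : ∑ i ∈ swapSet (Tset r I J) I J, ∑ j ∈ swapSet (Tset r I J) J I, epsPair r i j =
      ((∑ i ∈ I \ Tset r I J, ∑ j ∈ J \ Tset r I J, epsPair r i j) +
       (∑ i ∈ I \ Tset r I J, ∑ j ∈ I ∩ Tset r I J, epsPair r i j)) +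
      ((∑ i ∈ J ∩ Tset r I J, ∑ j ∈ J \ Tset r I J, epsPair r i j) +
       (∑ i ∈ J ∩ Tset r I J, ∑ j ∈ I ∩ Tset r I J, epsPair r i j)) := by
    rw [swapSet, Finset.sum_union (sdiff_inter_disj _ _ _)]
    congr 1
    · rw [← Finset.sum_add_distrib]
      refine Finset.sum_congr rfl fun i _ => ?_
      rw [swapSet, Finset.sum_union (sdiff_inter_disj _ _ _)]
    · rw [← Finset.sum_add_distrib]
      refine Finset.sum_congr rfl fun i _ => ?_
      rw [swapSet, Finset.sum_union (sdiff_inter_disj _ _ _)]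
  -- decompose the right-hand side
  have eR : ∑ i ∈ I, ∑ j ∈ J, epsPair r i j =
      ((∑ i ∈ I ∩ Tset r I J, ∑ j ∈ J ∩ Tset r I J, epsPair r i j) +
       (∑ i ∈ I ∩ Tset r I J, ∑ j ∈ J \ Tset r I J, epsPair r i j)) +
      ((∑ i ∈ I \ Tset r I J, ∑ j ∈ J ∩ Tset r I J, epsPair r i j) +
       (∑ i ∈ I \ Tset r I J, ∑ j ∈ J \ Tset r I J, epsPair r i j)) := by
    rw [hsplit I]
    congr 1
    · rw [← Finset.sum_add_distrib]
      refine Finset.sum_congr rfl fun i _ => hsplit J _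
    · rw [← Finset.sum_add_distrib]
      refine Finset.sum_congr rfl fun i _ => hsplit J _
  have hP4 : ∑ i ∈ J ∩ Tset r I J, ∑ j ∈ I ∩ Tset r I J, epsPair r i j =
      - ∑ i ∈ I ∩ Tset r I J, ∑ j ∈ J ∩ Tset r I J, epsPair r i j := by
    rw [Finset.sum_comm]
    rw [← Finset.sum_neg_distrib]
    refine Finset.sum_congr rfl fun j _ => ?_
    rw [← Finset.sum_neg_distrib]
    refine Finset.sum_congr rfl fun i _ => ?_
    rw [← eps_antisymm]
  have hP1 := A_zero hI hJ
  have hP2 : ∑ i ∈ I \ Tset r I J, ∑ j ∈ I ∩ Tset r I J, epsPair r i j = 0 :=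
    hsame I _ _ hI Finset.sdiff_subset Finset.inter_subset_left
  have hP3 : ∑ i ∈ J ∩ Tset r I J, ∑ j ∈ J \ Tset r I J, epsPair r i j = 0 :=
    hsame J _ _ hJ Finset.inter_subset_left Finset.sdiff_subset
  have hC1 : ∑ i ∈ I ∩ Tset r I J, ∑ j ∈ J \ Tset r I J, epsPair r i j = 0 := by
    refine hcross _ _ ?_ ?_ ?_ ?_
    · intro i hi; exact Finset.mem_union_left _ (Finset.mem_inter.1 hi).1
    · intro j hj; exact Finset.mem_union_right _ (Finset.mem_sdiff.1 hj).1
    · intro i hi; exact (Finset.mem_inter.1 hi).2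
    · intro j hj; exact (Finset.mem_sdiff.1 hj).2
  have hC2 : ∑ i ∈ I \ Tset r I J, ∑ j ∈ J ∩ Tset r I J, epsPair r i j = 0 := by
    refine hcross' _ _ ?_ ?_ ?_ ?_
    · intro i hi; exact Finset.mem_union_left _ (Finset.mem_sdiff.1 hi).1
    · intro j hj; exact Finset.mem_union_right _ (Finset.mem_inter.1 hj).1
    · intro i hi; exact (Finset.mem_sdiff.1 hi).2
    · intro j hj; exact (Finset.mem_inter.1 hj).2
  rw [eL, eR, hP1, hP2, hP3, hP4, hC1, hC2]
  ring

end EpsAux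

/-- The core identity of the Poisson-commutation of the `A_r` Q-system
Hamiltonians: summing over ordered pairs `(I, J)` of independent sets of `G_r`
with `|I| = m` and `|J| = n`,
`Σ_{(I,J)} (Σ_{i∈I} Σ_{j∈J} ε(i,j)) · Π_{i∈I} x_i · Π_{j∈J} x_j = 0`. -/
theorem eps_weighted_sum_indep_pairs_eq_zero
    (r : ℕ) (hr : 1 ≤ r) (R : Type*) [CommRing R] (x : ℕ → R) (m n : ℕ) :
    ∑ I ∈ (IndepSets r).filter (fun I => I.card = m),
      ∑ J ∈ (IndepSets r).filter (fun J => J.card = n),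
        ((∑ i ∈ I, ∑ j ∈ J, epsPair r i j : ℤ) : R) *
          ((∏ i ∈ I, x i) * ∏ j ∈ J, x j) = 0 := by
  classical
  rw [← Finset.sum_product']
  have hmem : ∀ p : Finset ℕ × Finset ℕ,
      p ∈ ((IndepSets r).filter (fun I => I.card = m)) ×ˢ
          ((IndepSets r).filter (fun J => J.card = n)) →
      EpsAux.Indep r p.1 ∧ EpsAux.Indep r p.2 ∧ p.1.card = m ∧ p.2.card = n := by
    intro p hp
    rw [Finset.mem_product, Finset.mem_filter, Finset.mem_filter] at hp
    exact ⟨EpsAux.mem_indepSets.1 hp.1.1, EpsAux.mem_indepSets.1 hp.2.1, hp.1.2, hp.2.2⟩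
  refine Finset.sum_involution
    (fun p _ => (EpsAux.swapSet (EpsAux.Tset r p.1 p.2) p.1 p.2,
                 EpsAux.swapSet (EpsAux.Tset r p.1 p.2) p.2 p.1)) ?_ ?_ ?_ ?_
  · -- terms cancel in pairs
    rintro ⟨I, J⟩ hp
    obtain ⟨hI, hJ, _, _⟩ := hmem _ hp
    have hW := EpsAux.W_swap hI hJ
    have hprod := EpsAux.swapSet_prod (r := r) (I := I) (J := J) x
    simp only
    rw [hW, hprod]
    push_cast
    ring
  · -- fixed points have zero weight
    rintro ⟨I, J⟩ hp hf hgp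
    apply hf
    obtain ⟨hI, hJ, _, _⟩ := hmem _ hp
    have h1 : EpsAux.swapSet (EpsAux.Tset r I J) I J = I := congrArg Prod.fst hgp
    have h2 : EpsAux.swapSet (EpsAux.Tset r I J) J I = J := congrArg Prod.snd hgp
    have hW := EpsAux.W_swap hI hJ
    rw [h1, h2] at hW
    have hz : (∑ i ∈ I, ∑ j ∈ J, epsPair r i j) = 0 := by linarith
    simp only [hz]
    push_cast
    ring
  · -- the involution stays in the index set
    rintro ⟨I, J⟩ hp
    obtain ⟨hI, hJ, hm, hn⟩ := hmem _ hp
    rw [Finset.mem_product, Finset.mem_filter, Finset.mem_filter]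
    refine ⟨⟨EpsAux.mem_indepSets.2 (EpsAux.swap_indep hI hJ).1, ?_⟩,
            ⟨EpsAux.mem_indepSets.2 (EpsAux.swap_indep hI hJ).2, ?_⟩⟩
    · rw [EpsAux.swapSet_card_left]; exact hm
    · rw [EpsAux.swapSet_card_right]; exact hn
  · -- it is an involution
    rintro ⟨I, J⟩ hp
    obtain ⟨hI, hJ, _, _⟩ := hmem _ hp
    have h := EpsAux.swap_swap hI hJ
    simp only
    exact Prod.ext h.1 h.2
end

section
/- Let C be the r×r Cartan matrix of type A_r (C_{αβ} = 2 if α = β, −1 if |α−β| = 1, 0 otherwise), which is invertible over ℚ, and let Ω be the 2r×2r block matrix [[0, C⁻¹],[−C⁻¹, 0]]. For β ∈ {0,1,…,r+1} let ē(β) ∈ ℚ^{2r} equal the standard basis vector e_β if 1 ≤ β ≤ r and 0 if β ∈ {0, r+1}, and let ē'(β) equal e_{r+β} if 1 ≤ β ≤ r and 0 if β ∈ {0, r+1}. Define v_{2α−1} = ē(α−1) − ē(α) − ē'(α−1) + ē'(α) for α ∈ {1,…,r+1} and v_{2α} = ē(α−1) − ē(α) − ē'(α) + ē'(α+1) for α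 ∈ {1,…,r}. Then for all i, j ∈ {1,…,2r+1}, v_iᵀ Ω v_j = ε(i,j). -/
/-! With `d_c = ē(c - 1) - ē(c)` (so `ē(0) = ē(r + 1) = 0`), every `v_i` is `(d_a, -d_b)` in the
two blocks, with `a = ⌈i/2⌉` and `b = ⌊i/2⌋ + 1`. Hence `v_iᵀ Ω v_j = K(b_i, a_j) - K(a_i, b_j)` for
`K(a, c) = d_aᵀ C⁻¹ d_c`. The inverse of `C` is the Green function
`min(a, c) (r + 1 - max(a, c)) / (r + 1)` of the discrete Dirichlet Laplacian on `{0, …, r + 1}`,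
and `C⁻¹ d_c` is the linear function `x / (r + 1)` minus the unit step at `c`; so
`K(a, c) = δ_{ac} - 1 / (r + 1)`. The constants cancel and `δ_{b_i a_j} - δ_{a_i b_j}` is `ε(i, j)`. -/

open Finset

/-- The Cartan matrix of type `A_r`. -/
def CartanA (r : ℕ) : Matrix (Fin r) (Fin r) ℚ :=
  Matrix.of fun α β =>
    if α = β then 2 else if (α : ℕ) + 1 = (β : ℕ) ∨ (β : ℕ) + 1 = (α : ℕ) then -1 else 0

/-- The Poisson coefficient matrix `Ω = [[0, C⁻¹], [-C⁻¹, 0]]`, indexed by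
`Fin r ⊕ Fin r` (the first block for `A_1,…,A_r`, the second for
`A_{r+1},…,A_{2r}`). -/
noncomputable def OmegaA (r : ℕ) : Matrix (Fin r ⊕ Fin r) (Fin r ⊕ Fin r) ℚ :=
  Matrix.fromBlocks 0 (CartanA r)⁻¹ (-(CartanA r)⁻¹) 0

/-- `ē(β)`: the standard basis vector `e_β` of the first block when
`1 ≤ β ≤ r`, and `0` when `β ∈ {0, r+1}`. -/
def ebar (r β : ℕ) : (Fin r ⊕ Fin r) → ℚ :=
  if h : 1 ≤ β ∧ β ≤ r then Pi.single (Sum.inl ⟨β - 1, by omega⟩) 1 else 0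

/-- `ē'(β)`: the standard basis vector `e_{r+β}` (second block) when
`1 ≤ β ≤ r`, and `0` when `β ∈ {0, r+1}`. -/
def ebar' (r β : ℕ) : (Fin r ⊕ Fin r) → ℚ :=
  if h : 1 ≤ β ∧ β ≤ r then Pi.single (Sum.inr ⟨β - 1, by omega⟩) 1 else 0

/-- The exponent vector `v_i` of the loop weight `γ_i` as a Laurent monomial:
`v_{2α-1} = ē(α-1) - ē(α) - ē'(α-1) + ē'(α)` for `α ∈ {1,…,r+1}` and
`v_{2α} = ē(α-1) - ē(α) - ē'(α) + ē'(α+1)` for `α ∈ {1,…,r}`. -/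
def vVec (r i : ℕ) : (Fin r ⊕ Fin r) → ℚ :=
  if i % 2 = 1 then
    ebar r ((i + 1) / 2 - 1) - ebar r ((i + 1) / 2)
      - ebar' r ((i + 1) / 2 - 1) + ebar' r ((i + 1) / 2)
  else
    ebar r (i / 2 - 1) - ebar r (i / 2) - ebar' r (i / 2) + ebar' r (i / 2 + 1)

open Matrix

/-- Vectors of `ℚ^r` are written as functions on `ℕ` read off at `1, …, r`; the paper's convention
`ē(0) = ē(r + 1) = 0` becomes the fact that the values at `0` and `r + 1` are discarded. -/
def interiorVec (r : ℕ) (f : ℕ → ℚ) : Fin r → ℚ := fun b => f (b + 1)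

lemma interiorVec_sub (r : ℕ) (f g : ℕ → ℚ) :
    interiorVec r (f - g) = interiorVec r f - interiorVec r g := rfl

lemma interiorVec_single (r a : ℕ) :
    interiorVec r (Pi.single a 1) =
      if h : 1 ≤ a ∧ a ≤ r then Pi.single ⟨a - 1, by omega⟩ 1 else 0 := by
  ext b
  split_ifs with h
  · simp only [interiorVec, Pi.single_apply, Fin.ext_iff]
    congr 1
    exact propext (by omega)
  · simp only [interiorVec, Pi.single_apply, Pi.zero_apply]
    exact if_neg (by omega)

lemma cartanA_apply (r : ℕ) (a b : Fin r) :
    CartanA r a b = 2 * (if (b : ℕ) = a then 1 else 0) - (if (b : ℕ) = a + 1 then 1 else 0)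
      - (if (b : ℕ) + 1 = a then 1 else 0) := by
  simp only [CartanA, of_apply, Fin.ext_iff]
  split_ifs <;> first | omega | norm_num

lemma cartanA_mulVec_interiorVec (r : ℕ) {f : ℕ → ℚ} (h0 : f 0 = 0) (hr : f (r + 1) = 0) :
    CartanA r *ᵥ interiorVec r f = interiorVec r (fun a => 2 * f a - f (a - 1) - f (a + 1)) := by
  ext a
  simp only [mulVec, dotProduct, cartanA_apply, interiorVec]
  rw [Fin.sum_univ_eq_sum_range (fun b => (2 * (if b = (a : ℕ) then 1 else 0)
    - (if b = a + 1 then 1 else 0) - (if b + 1 = (a : ℕ) then 1 else 0)) * f (b + 1))]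
  simp only [sub_mul, mul_assoc, Finset.sum_sub_distrib, ← Finset.mul_sum, ite_mul, one_mul,
    zero_mul, Finset.sum_ite_eq', Finset.mem_range]
  obtain ⟨a, ha⟩ := a
  have hnext : (if a + 1 < r then f (a + 1 + 1) else 0) = f (a + 1 + 1) := by
    split_ifs with h
    · rfl
    · rw [show a + 1 + 1 = r + 1 by omega, hr]
  rw [if_pos ha, hnext]
  rcases a with _ | a
  · simp [h0]
  · simp only [Nat.add_right_cancel_iff, Finset.sum_ite_eq', Finset.mem_range, Nat.add_sub_cancel,
      if_pos (show a < r by omega)]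
    ring

/-- The Green function of the discrete Laplacian on `{0, …, r + 1}` with Dirichlet boundary. -/
def greenFun (r a c : ℕ) : ℚ := (min a c : ℕ) * ((r : ℚ) + 1 - (max a c : ℕ)) / ((r : ℚ) + 1)

lemma greenFun_comm (r a c : ℕ) : greenFun r a c = greenFun r c a := by
  rw [greenFun, greenFun, min_comm, max_comm]

lemma greenFun_of_le (r : ℕ) {a c : ℕ} (h : a ≤ c) :
    greenFun r a c = a * ((r : ℚ) + 1 - c) / ((r : ℚ) + 1) := by
  rw [greenFun, min_eq_left h, max_eq_right h]

lemma greenFun_zero_left (r c : ℕ) : greenFun r 0 c = 0 := by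
  simp [greenFun]

lemma greenFun_right_boundary (r : ℕ) {c : ℕ} (hc : c ≤ r + 1) : greenFun r (r + 1) c = 0 := by
  rw [greenFun_comm, greenFun_of_le r hc]
  push_cast
  ring

lemma greenFun_laplacian (r : ℕ) {a : ℕ} (c : ℕ) (ha : 1 ≤ a) :
    2 * greenFun r a c - greenFun r (a - 1) c - greenFun r (a + 1) c =
      if a = c then 1 else 0 := by
  obtain ⟨a, rfl⟩ : ∃ b, a = b + 1 := ⟨a - 1, by omega⟩
  rcases lt_trichotomy (a + 1) c with h | rfl | h
  · rw [greenFun_of_le r h.le, greenFun_of_le r (by omega), greenFun_of_le r (by omega),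
      if_neg h.ne]
    push_cast
    field_simp
    ring
  · rw [greenFun_of_le r le_rfl, greenFun_of_le r (by omega), greenFun_comm,
      greenFun_of_le r (by omega), if_pos rfl]
    push_cast
    field_simp
    ring
  · rw [greenFun_comm, greenFun_of_le r h.le, greenFun_comm, greenFun_of_le r (by omega),
      greenFun_comm, greenFun_of_le r (by omega), if_neg h.ne']
    push_cast
    field_simp
    ring

def greenA (r : ℕ) : Matrix (Fin r) (Fin r) ℚ := of fun a c => greenFun r (a + 1) (c + 1)

lemma cartanA_mul_greenA (r : ℕ) : CartanA r * greenA r = 1 := by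
  ext a c
  change (CartanA r *ᵥ interiorVec r (greenFun r · (c + 1))) a = _
  rw [cartanA_mulVec_interiorVec r (f := (greenFun r · (c + 1))) (greenFun_zero_left r _)
      (greenFun_right_boundary r (by omega)),
    interiorVec, greenFun_laplacian r _ (by omega), one_apply]
  simp [Fin.ext_iff]

lemma isUnit_det_cartanA (r : ℕ) : IsUnit (CartanA r).det :=
  isUnit_det_of_right_inverse (cartanA_mul_greenA r)

lemma inv_cartanA (r : ℕ) : (CartanA r)⁻¹ = greenA r :=
  inv_eq_right_inv (cartanA_mul_greenA r)

lemma greenA_mulVec_interiorVec_single (r : ℕ) {c : ℕ} (hc : c ≤ r + 1) :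
    greenA r *ᵥ interiorVec r (Pi.single c 1) = interiorVec r (greenFun r · c) := by
  rw [interiorVec_single]
  split_ifs with h
  · rw [mulVec_single_one]
    ext b
    simp [greenA, interiorVec, Nat.sub_add_cancel h.1]
  · ext b
    rcases (show c = 0 ∨ c = r + 1 by omega) with rfl | rfl
    · simp [interiorVec, greenFun_comm, greenFun_zero_left]
    · simp [interiorVec, greenFun_comm, greenFun_right_boundary]

def diffVec (c : ℕ) : ℕ → ℚ := Pi.single (c - 1) 1 - Pi.single c 1

lemma greenFun_pred_sub_greenFun (r : ℕ) {c : ℕ} (hc : 1 ≤ c) (x : ℕ) :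
    greenFun r x (c - 1) - greenFun r x c = x / ((r : ℚ) + 1) - if c ≤ x then 1 else 0 := by
  split_ifs with h
  · rw [greenFun_comm, greenFun_of_le r (by omega), greenFun_comm, greenFun_of_le r h]
    push_cast [hc]
    field_simp
    ring
  · rw [greenFun_of_le r (by omega), greenFun_of_le r (by omega)]
    push_cast [hc]
    field_simp
    ring

lemma greenA_mulVec_interiorVec_diffVec (r : ℕ) {c : ℕ} (hc : 1 ≤ c) (hcr : c ≤ r + 1) :
    greenA r *ᵥ interiorVec r (diffVec c) =
      interiorVec r (fun x => x / ((r : ℚ) + 1) - if c ≤ x then 1 else 0) := by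
  rw [diffVec, interiorVec_sub, mulVec_sub, greenA_mulVec_interiorVec_single r (by omega),
    greenA_mulVec_interiorVec_single r hcr, ← interiorVec_sub]
  exact congrArg _ (funext (greenFun_pred_sub_greenFun r hc))

lemma interiorVec_single_dotProduct (r : ℕ) {a : ℕ} (ha : a ≤ r + 1) {f : ℕ → ℚ}
    (h0 : f 0 = 0) (hr : f (r + 1) = 0) :
    interiorVec r (Pi.single a 1) ⬝ᵥ interiorVec r f = f a := by
  rw [interiorVec_single]
  split_ifs with h
  · rw [single_one_dotProduct, interiorVec, Nat.sub_add_cancel h.1]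
  · rcases (show a = 0 ∨ a = r + 1 by omega) with rfl | rfl
    · rw [zero_dotProduct, h0]
    · rw [zero_dotProduct, hr]

lemma interiorVec_diffVec_dotProduct (r : ℕ) {a : ℕ} (ha : 1 ≤ a) (har : a ≤ r + 1) {f : ℕ → ℚ}
    (h0 : f 0 = 0) (hr : f (r + 1) = 0) :
    interiorVec r (diffVec a) ⬝ᵥ interiorVec r f = f (a - 1) - f a := by
  rw [diffVec, interiorVec_sub, sub_dotProduct, interiorVec_single_dotProduct r (by omega) h0 hr,
    interiorVec_single_dotProduct r har h0 hr]

lemma interiorVec_diffVec_dotProduct_greenA_mulVec (r : ℕ) {a c : ℕ} (ha : 1 ≤ a)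
    (har : a ≤ r + 1) (hc : 1 ≤ c) (hcr : c ≤ r + 1) :
    interiorVec r (diffVec a) ⬝ᵥ greenA r *ᵥ interiorVec r (diffVec c) =
      (if a = c then 1 else 0) - 1 / ((r : ℚ) + 1) := by
  have hr1 : (r : ℚ) + 1 ≠ 0 := by positivity
  rw [greenA_mulVec_interiorVec_diffVec r hc hcr,
    interiorVec_diffVec_dotProduct r ha har (by simp; omega) (by simp [hr1, hcr])]
  push_cast [ha]
  split_ifs <;> first | omega | (field_simp; ring)

lemma sum_elim_dotProduct_fromBlocks_mulVec {n R : Type*} [Fintype n] [CommRing R]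
    (M : Matrix n n R) (x y x' y' : n → R) :
    Sum.elim x y ⬝ᵥ fromBlocks 0 M (-M) 0 *ᵥ Sum.elim x' y' = x ⬝ᵥ M *ᵥ y' - y ⬝ᵥ M *ᵥ x' := by
  rw [fromBlocks_mulVec]
  simp [dotProduct, Fintype.sum_sum_type, sub_eq_add_neg, neg_mulVec]

lemma ebar_eq (r β : ℕ) : ebar r β = Sum.elim (interiorVec r (Pi.single β 1)) 0 := by
  rw [ebar, interiorVec_single]
  split_ifs <;> ext (x | x) <;> simp [Pi.single_apply]

lemma ebar'_eq (r β : ℕ) :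
    ebar' r β = Sum.elim (0 : Fin r → ℚ) (interiorVec r (Pi.single β 1)) := by
  rw [ebar', interiorVec_single]
  split_ifs <;> ext (x | x) <;> simp [Pi.single_apply]

lemma vVec_eq (r i : ℕ) :
    vVec r i = Sum.elim (interiorVec r (diffVec ((i + 1) / 2)))
      (-interiorVec r (diffVec (i / 2 + 1))) := by
  rw [vVec]
  simp only [ebar_eq, ebar'_eq]
  split_ifs with h
  · rw [show i / 2 + 1 = (i + 1) / 2 by omega]
    ext (x | x) <;> simp [diffVec, interiorVec_sub, neg_add_eq_sub]
  · rw [show (i + 1) / 2 = i / 2 by omega]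
    ext (x | x) <;> simp [diffVec, interiorVec_sub, neg_add_eq_sub]

lemma epsPair_eq (r : ℕ) {i j : ℕ} (hi : 1 ≤ i) (hir : i ≤ 2 * r + 1) (hj : 1 ≤ j)
    (hjr : j ≤ 2 * r + 1) :
    epsPair r i j =
      (if i / 2 + 1 = (j + 1) / 2 then 1 else 0) - (if (i + 1) / 2 = j / 2 + 1 then 1 else 0) := by
  simp only [epsPair, GrAdj, Nat.even_iff]
  split_ifs <;> omega

theorem vVec_dot_Omega_eq_epsPair_general (r : ℕ) :
    IsUnit (CartanA r).det ∧
    ∀ i ∈ Finset.Icc 1 (2 * r + 1), ∀ j ∈ Finset.Icc 1 (2 * r + 1),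
      dotProduct (vVec r i) ((OmegaA r).mulVec (vVec r j)) =
        ((epsPair r i j : ℤ) : ℚ) := by
  refine ⟨isUnit_det_cartanA r, fun i hi j hj => ?_⟩
  rw [Finset.mem_Icc] at hi hj
  rw [OmegaA, inv_cartanA, vVec_eq, vVec_eq, sum_elim_dotProduct_fromBlocks_mulVec, mulVec_neg,
    dotProduct_neg, neg_dotProduct,
    interiorVec_diffVec_dotProduct_greenA_mulVec r (by omega) (by omega) (by omega) (by omega),
    interiorVec_diffVec_dotProduct_greenA_mulVec r (by omega) (by omega) (by omega) (by omega),
    epsPair_eq r hi.1 hi.2 hj.1 hj.2]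
  push_cast
  ring

/-- The Cartan matrix of type `A_r` is invertible over `ℚ`, and the
log-canonical Poisson bracket coefficients of the loop weights reproduce the
intersection pairing: `v_iᵀ Ω v_j = ε(i,j)` for all `i, j ∈ {1,…,2r+1}`. -/
theorem vVec_dot_Omega_eq_epsPair (r : ℕ) (hr : 1 ≤ r) :
    IsUnit (CartanA r).det ∧
    ∀ i ∈ Finset.Icc 1 (2 * r + 1), ∀ j ∈ Finset.Icc 1 (2 * r + 1),
      dotProduct (vVec r i) ((OmegaA r).mulVec (vVec r j)) =
        ((epsPair r i j : ℤ) : ℚ) :=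
  vVec_dot_Omega_eq_epsPair_general r
end

section
/- For every k ∈ ℤ, H_1(k) = H_1(k+1), where H_1(k) := Q_{1,k+1}/Q_{1,k} + Q_{2,2k+1}²/(Q_{1,k}Q_{1,k+1}Q_{2,2k}) + Q_{1,k}Q_{2,2k+1}²/(Q_{1,k+1}Q_{2,2k}²) + 2·Q_{1,k}²/Q_{2,2k}² + Q_{1,k}³Q_{1,k+1}/(Q_{2,2k}²Q_{2,2k+1}²) + 2·Q_{1,k}Q_{1,k+1}/Q_{2,2k+1}² + 1/Q_{2,2k} + Q_{1,k+1}Q_{2,2k}²/(Q_{1,k}Q_{2,2k+1}²) + Q_{2,2k}/(Q_{1,k}Q_{1,k+1}) + Q_{1,k}/Q_{1,k+1}. That is, H_1 is a conserved quantity of the B_2 Q-system. -/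
/-- The Hamiltonian `H_1(k)` of the `B_2` Q-system: the partition function of
single hard particles, written out explicitly. -/
noncomputable def HamB2one (Q1 Q2 : ℤ → ℂ) (k : ℤ) : ℂ :=
  Q1 (k + 1) / Q1 k
    + Q2 (2 * k + 1) ^ 2 / (Q1 k * Q1 (k + 1) * Q2 (2 * k))
    + Q1 k * Q2 (2 * k + 1) ^ 2 / (Q1 (k + 1) * Q2 (2 * k) ^ 2)
    + 2 * Q1 k ^ 2 / Q2 (2 * k) ^ 2
    + Q1 k ^ 3 * Q1 (k + 1) / (Q2 (2 * k) ^ 2 * Q2 (2 * k + 1) ^ 2)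
    + 2 * (Q1 k * Q1 (k + 1)) / Q2 (2 * k + 1) ^ 2
    + 1 / Q2 (2 * k)
    + Q1 (k + 1) * Q2 (2 * k) ^ 2 / (Q1 k * Q2 (2 * k + 1) ^ 2)
    + Q2 (2 * k) / (Q1 k * Q1 (k + 1))
    + Q1 k / Q1 (k + 1)

/-!
`H_1(k)` is a rational function of the window `(Q_{1,k}, Q_{1,k+1}, Q_{2,2k}, Q_{2,2k+1})`,
and three instances of the Q-system relations express the next window
`(Q_{1,k+1}, Q_{1,k+2}, Q_{2,2k+2}, Q_{2,2k+3})` rationally in terms of this one.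
Conservation is then the invariance of that rational function under this birational map,
an identity of rational functions once `Q_{1,k+2}`, `Q_{2,2k+2}` and `Q_{2,2k+3}` are
eliminated.
-/

/-- `H_1` as a function of the window `(a, b, c, d) = (Q_{1,k}, Q_{1,k+1}, Q_{2,2k}, Q_{2,2k+1})`. -/
def b2Ham {K : Type*} [Field K] (a b c d : K) : K :=
  b / a + d ^ 2 / (a * b * c) + a * d ^ 2 / (b * c ^ 2) + 2 * a ^ 2 / c ^ 2
    + a ^ 3 * b / (c ^ 2 * d ^ 2) + 2 * (a * b) / d ^ 2 + 1 / c
    + b * c ^ 2 / (a * d ^ 2) + c / (a * b) + a / b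

theorem b2Ham_eq_of_mutation {K : Type*} [Field K] {a b c d e f g : K}
    (ha : a ≠ 0) (hb : b ≠ 0) (hc : c ≠ 0) (hd : d ≠ 0)
    (he : e ≠ 0) (hf : f ≠ 0) (hg : g ≠ 0)
    (hga : g * a = b ^ 2 + e) (hec : e * c = d ^ 2 + a * b) (hfd : f * d = e ^ 2 + b ^ 2) :
    b2Ham a b c d = b2Ham b g e f := by
  -- Eliminating `c` rather than `e` keeps every denominator a monomial or a single binomial.
  have hc_eq : c = (d ^ 2 + b * a) / e := by
    rw [eq_div_iff he]
    linear_combination hec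
  rw [← eq_div_iff ha] at hga
  rw [← eq_div_iff hd] at hfd
  subst hga hfd hc_eq
  simp only [ne_eq, div_eq_zero_iff, he, ha, hd, or_false] at hc hf hg
  unfold b2Ham
  field_simp
  ring

theorem Int.fdiv_two_mul_two (k : ℤ) : Int.fdiv (2 * k) 2 = k := by
  rw [Int.fdiv_eq_ediv_of_nonneg _ (by norm_num)]
  omega

theorem Int.fdiv_two_mul_add_one_two (k : ℤ) : Int.fdiv (2 * k + 1) 2 = k := by
  rw [Int.fdiv_eq_ediv_of_nonneg _ (by norm_num)]
  omega

section QSystem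

variable {Q1 Q2 : ℤ → ℂ}

theorem HamB2one_eq_b2Ham (k : ℤ) :
    HamB2one Q1 Q2 k = b2Ham (Q1 k) (Q1 (k + 1)) (Q2 (2 * k)) (Q2 (2 * k + 1)) :=
  rfl

theorem qsystem_Q1_step (hrec1 : ∀ k : ℤ, Q1 (k + 1) * Q1 (k - 1) = Q1 k ^ 2 + Q2 (2 * k))
    (k : ℤ) : Q1 (k + 1 + 1) * Q1 k = Q1 (k + 1) ^ 2 + Q2 (2 * (k + 1)) := by
  simpa using hrec1 (k + 1)

theorem qsystem_Q2_odd_step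
    (hrec2 : ∀ k : ℤ, Q2 (k + 1) * Q2 (k - 1) =
      Q2 k ^ 2 + Q1 (Int.fdiv k 2) * Q1 (Int.fdiv (k + 1) 2))
    (k : ℤ) :
    Q2 (2 * (k + 1)) * Q2 (2 * k) = Q2 (2 * k + 1) ^ 2 + Q1 k * Q1 (k + 1) := by
  have h := hrec2 (2 * k + 1)
  rwa [show 2 * k + 1 + 1 = 2 * (k + 1) by ring, add_sub_cancel_right,
    Int.fdiv_two_mul_add_one_two, Int.fdiv_two_mul_two] at h

theorem qsystem_Q2_even_step
    (hrec2 : ∀ k : ℤ, Q2 (k + 1) * Q2 (k - 1) =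
      Q2 k ^ 2 + Q1 (Int.fdiv k 2) * Q1 (Int.fdiv (k + 1) 2))
    (k : ℤ) :
    Q2 (2 * (k + 1) + 1) * Q2 (2 * k + 1) = Q2 (2 * (k + 1)) ^ 2 + Q1 (k + 1) ^ 2 := by
  have h := hrec2 (2 * (k + 1))
  rwa [show 2 * (k + 1) - 1 = 2 * k + 1 by ring, Int.fdiv_two_mul_two,
    Int.fdiv_two_mul_add_one_two, ← sq] at h

end QSystem

/-- `H_1` is a conserved quantity of the `B_2` Q-system. -/
theorem HamB2one_conserved
    (Q1 Q2 : ℤ → ℂ)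
    (h1ne : ∀ k : ℤ, Q1 k ≠ 0) (h2ne : ∀ k : ℤ, Q2 k ≠ 0)
    (hrec1 : ∀ k : ℤ, Q1 (k + 1) * Q1 (k - 1) = Q1 k ^ 2 + Q2 (2 * k))
    (hrec2 : ∀ k : ℤ, Q2 (k + 1) * Q2 (k - 1) =
      Q2 k ^ 2 + Q1 (Int.fdiv k 2) * Q1 (Int.fdiv (k + 1) 2)) :
    ∀ k : ℤ, HamB2one Q1 Q2 k = HamB2one Q1 Q2 (k + 1) := by
  intro k
  rw [HamB2one_eq_b2Ham, HamB2one_eq_b2Ham]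
  exact b2Ham_eq_of_mutation (h1ne _) (h1ne _) (h2ne _) (h2ne _) (h2ne _) (h2ne _) (h1ne _)
    (qsystem_Q1_step hrec1 k) (qsystem_Q2_odd_step hrec2 k) (qsystem_Q2_even_step hrec2 k)
end
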